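/- arXiv:0706.3249 — 4 statements merged into one kernel-verified Lean document; each statement's English description precedes it below -/
import Mathlib

section
/- Let T be an amenable tableau whose content is (k, k−1, k−2, …, k−j), i.e. c_i(T) = k+1−i for 1 ≤ i ≤ j+1 and c_i(T) = 0 for i > j+1, where k > j ≥ 1. Then for every 1 ≤ i ≤ j, the number of marked letters i' appearing in T is at most the number of marked letters (i+1)' appearing in T. -/
/-!
Letters of the marked alphabet 1′ < 1 < 2′ < 2 < 3′ < 3 < ⋯ are encoded as
positive natural numbers: `2 * i - 1` encodes the marked letter i′ and `2 * i`
encodes the unmarked letter i.  The successor in the alphabet is then `· + 1`,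
and the (unmarked) value of a letter `t` is `(t + 1) / 2`.
-/

/-- `l` is (the list of parts of) a partition: weakly decreasing positive parts. -/
def IsPartitionList (l : List ℕ) : Prop :=
  l.Pairwise (· ≥ ·) ∧ ∀ x ∈ l, 0 < x

/-- `l` is a strict partition: strictly decreasing positive parts. -/
def IsStrictPartitionList (l : List ℕ) : Prop :=
  l.Pairwise (· > ·) ∧ ∀ x ∈ l, 0 < x

/-- The cells of a row-convex diagram with rows `0, …, nrows - 1`, where row `r`
occupies the columns `c` with `lo r ≤ c < hi r`.  (For the Young diagram of a
partition `μ` take `lo r = 0`, `hi r = μ_(r+1)`; for the shifted skew diagram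
`λ/μ` take `lo r = r + μ_(r+1)`, `hi r = r + λ_(r+1)`.)  Rows and columns are
0-indexed. -/
def InDiagram (nrows : ℕ) (lo hi : ℕ → ℕ) (p : ℕ × ℕ) : Prop :=
  p.1 < nrows ∧ lo p.1 ≤ p.2 ∧ p.2 < hi p.1

/-- The reading word of a filling `T`: entries read right to left along each
row, rows top to bottom. -/
def readingWord (nrows : ℕ) (lo hi : ℕ → ℕ) (T : ℕ × ℕ → ℕ) : List ℕ :=
  (List.range nrows).flatMap fun r =>
    ((List.range' (lo r) (hi r - lo r)).reverse).map fun c => T (r, c)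

/-- The augmented reverse reading word: the reading word read backwards, with
every entry increased by one step in the alphabet order. -/
def augWord (nrows : ℕ) (lo hi : ℕ → ℕ) (T : ℕ × ℕ → ℕ) : List ℕ :=
  ((readingWord nrows lo hi T).reverse).map (· + 1)

/-- A word in the marked alphabet is lattice if, reading it from the left,
whenever the number of unmarked i's read so far equals the number of unmarked
(i+1)'s read so far, the next letter is neither (i+1) (encoded `2*(i+1)`)
nor (i+1)′ (encoded `2*(i+1) - 1 = 2*i + 1`). -/
def IsLatticeWord (w : List ℕ) : Prop :=
  ∀ (p : List ℕ) (x : ℕ), p ++ [x] <+: w → ∀ i : ℕ, 1 ≤ i →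
    p.count (2 * i) = p.count (2 * (i + 1)) →
      x ≠ 2 * (i + 1) ∧ x ≠ 2 * i + 1

/-- `T` is an amenable filling of the diagram determined by `nrows`, `lo`, `hi`:
it is a genuine filling of the diagram by letters (positive inside, `0` outside),
rows and columns weakly increase, each row has at most one i′ for each i,
each column has at most one unmarked i for each i, the concatenation of the
reading word and the augmented reverse reading word is lattice, and every
occurrence of i′ in the reading word has an occurrence of i strictly later
(i.e. the rightmost i is to the right of the rightmost i′). -/
def IsAmenable (nrows : ℕ) (lo hi : ℕ → ℕ) (T : ℕ × ℕ → ℕ) : Prop :=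
  (∀ p, InDiagram nrows lo hi p → 1 ≤ T p) ∧
  (∀ p, ¬ InDiagram nrows lo hi p → T p = 0) ∧
  (∀ r c, InDiagram nrows lo hi (r, c) → InDiagram nrows lo hi (r, c + 1) →
      T (r, c) ≤ T (r, c + 1)) ∧
  (∀ r c, InDiagram nrows lo hi (r, c) → InDiagram nrows lo hi (r + 1, c) →
      T (r, c) ≤ T (r + 1, c)) ∧
  (∀ r c₁ c₂, ∀ i : ℕ, 1 ≤ i → c₁ ≠ c₂ → InDiagram nrows lo hi (r, c₁) →
      InDiagram nrows lo hi (r, c₂) →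
      ¬ (T (r, c₁) = 2 * i - 1 ∧ T (r, c₂) = 2 * i - 1)) ∧
  (∀ r₁ r₂ c, ∀ i : ℕ, 1 ≤ i → r₁ ≠ r₂ → InDiagram nrows lo hi (r₁, c) →
      InDiagram nrows lo hi (r₂, c) →
      ¬ (T (r₁, c) = 2 * i ∧ T (r₂, c) = 2 * i)) ∧
  IsLatticeWord (readingWord nrows lo hi T ++ augWord nrows lo hi T) ∧
  (∀ i : ℕ, 1 ≤ i → ∀ p : ℕ, (readingWord nrows lo hi T)[p]? = some (2 * i - 1) →
      ∃ q : ℕ, p < q ∧ (readingWord nrows lo hi T)[q]? = some (2 * i))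

/-- The number of entries of a word equal to i or i′. -/
def contentAt (w : List ℕ) (i : ℕ) : ℕ :=
  w.count (2 * i) + w.count (2 * i - 1)

/-- The filling `T` has content `lam`: for every `i ≥ 1` the number of entries
equal to i or i′ is the i-th part of `lam` (0 beyond the length of `lam`). -/
def HasContent (nrows : ℕ) (lo hi : ℕ → ℕ) (T : ℕ × ℕ → ℕ) (lam : List ℕ) : Prop :=
  ∀ i : ℕ, 1 ≤ i → contentAt (readingWord nrows lo hi T) i = lam.getD (i - 1) 0

/-- The amenable tableaux of (straight) shape `mu` and content `lam`. -/
def gSet (lam mu : List ℕ) : Set (ℕ × ℕ → ℕ) :=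
  {T | IsAmenable mu.length (fun _ => 0) (fun r => mu.getD r 0) T ∧
       HasContent mu.length (fun _ => 0) (fun r => mu.getD r 0) T lam}

/-- The Stembridge coefficient `g_{λμ}`: the number of amenable tableaux of
shape `mu` and content `lam`. -/
noncomputable def gCoeff (lam mu : List ℕ) : ℕ := (gSet lam mu).ncard

/-- The amenable shifted skew tableaux of shape `lam/mu` and content `nu`. -/
def fSet (lam mu nu : List ℕ) : Set (ℕ × ℕ → ℕ) :=
  {T | IsAmenable lam.length (fun r => r + mu.getD r 0) (fun r => r + lam.getD r 0) T ∧
       HasContent lam.length (fun r => r + mu.getD r 0) (fun r => r + lam.getD r 0) T nu}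

/-- The coefficient `f^λ_{μν}`: the number of amenable shifted skew tableaux of
shape `λ/μ` and content `ν` (this is `0` when `S(μ) ⊄ S(λ)`). -/
noncomputable def fCoeff (lam mu nu : List ℕ) : ℕ := (fSet lam mu nu).ncard

/-- The staircase `(k, k-1, …, 2, 1)` of length `k`. -/
def staircase (k : ℕ) : List ℕ := (List.range k).map fun i => k - i

/-- `μ + 1^r`: add 1 to each of the first `r` parts of `μ` (creating new parts
equal to 1 if `r` exceeds the length of `μ`). -/
def addOnes (r : ℕ) (mu : List ℕ) : List ℕ :=
  (List.range (max mu.length r)).map fun i => mu.getD i 0 + (if i < r then 1 else 0)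

/-- `μ ∪ s`: insert `s` as a new part, re-sorting into weakly decreasing order. -/
def insertPart (mu : List ℕ) (s : ℕ) : List ℕ :=
  mu.takeWhile (fun x => decide (s ≤ x)) ++ s :: mu.dropWhile (fun x => decide (s ≤ x))

/-- The conjugate partition `μ′`. -/
def conjugatePartition (mu : List ℕ) : List ℕ :=
  (List.range (mu.getD 0 0)).map fun j => mu.countP fun x => decide (j < x)

/-- A near staircase: a strict partition of the form `ρ + 1^r` with `1 ≤ r ≤ k`
or `ρ ∪ r` with `r ≥ k + 1`, where `ρ` is the staircase of length `k`. -/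
def NearStaircase (lam : List ℕ) : Prop :=
  (∃ k r : ℕ, 1 ≤ r ∧ r ≤ k ∧ lam = addOnes r (staircase k)) ∨
  (∃ k r : ℕ, k + 1 ≤ r ∧ lam = r :: staircase k)

/-
Let `w` be the reading word and suppose `i′` occurs in it; by condition (6) so does `i`.
Write `w = u ++ i :: v` with `v` free of `i`; by (6) again `v` has no `i′`. In `w ŵ` the last
`i` of `w` reappears, shifted, as an `(i+1)′`, preceded by `w` and the shifted reverse of `v`,
which contributes no `i`. Lattice-ness makes the `i`s strictly outnumber the `(i+1)`s before an
`(i+1)′`, so `#i > #(i+1)` in `w`. Since `c_i = c_{i+1} + 1`, this forces `#i′ ≤ #(i+1)′`.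
-/

theorem List.exists_eq_append_cons_notMem_of_mem {α : Type*} {a : α} {l : List α} (h : a ∈ l) :
    ∃ s t, l = s ++ a :: t ∧ a ∉ t := by
  induction l using List.reverseRecOn with
  | nil => simp at h
  | append_singleton l x ih =>
    by_cases hx : x = a
    · exact ⟨l, [], by simp [hx], by simp⟩
    · obtain ⟨s, t, rfl, ht⟩ := ih (by simpa [Ne.symm hx] using h)
      exact ⟨s, t ++ [x], by simp, by simp [ht, Ne.symm hx]⟩

theorem List.notMem_of_forall_exists_later {α : Type*} {a b : α} {s t : List α} (ht : a ∉ t)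
    (h : ∀ p : ℕ, (s ++ a :: t)[p]? = some b → ∃ q, p < q ∧ (s ++ a :: t)[q]? = some a) :
    b ∉ t := by
  intro hb
  obtain ⟨r, hr, rfl⟩ := List.getElem_of_mem hb
  obtain ⟨q, hq, hqa⟩ := h (s.length + (r + 1)) (by
    rw [List.getElem?_append_right (by omega)]; simp)
  rw [List.getElem?_append_right (by omega),
    show q - s.length = (q - s.length - 1) + 1 by omega, List.getElem?_cons_succ] at hqa
  exact ht (List.mem_of_getElem? hqa)

namespace IsLatticeWord

variable {W : List ℕ} {i : ℕ}

theorem count_succ_le_of_prefix (hL : IsLatticeWord W) (hi : 1 ≤ i) {p : List ℕ}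
    (hp : p <+: W) : p.count (2 * (i + 1)) ≤ p.count (2 * i) := by
  induction p using List.reverseRecOn with
  | nil => simp
  | append_singleton p x ih =>
    have ih := ih ((List.prefix_append p [x]).trans hp)
    rw [List.count_append, List.count_append]
    rcases ih.eq_or_lt with heq | hlt
    · have hx : [x].count (2 * (i + 1)) = 0 :=
        List.count_eq_zero.2 fun hmem =>
          (hL p x hp i hi heq.symm).1 (List.eq_of_mem_singleton hmem).symm
      omega
    · have hx : [x].count (2 * (i + 1)) ≤ 1 := List.count_le_length
      omega

theorem count_succ_lt_of_prefix (hL : IsLatticeWord W) (hi : 1 ≤ i) {p : List ℕ}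
    (hp : p ++ [2 * i + 1] <+: W) : p.count (2 * (i + 1)) < p.count (2 * i) :=
  (hL.count_succ_le_of_prefix hi ((List.prefix_append _ _).trans hp)).lt_of_ne
    fun h => (hL p _ hp i hi h.symm).2 rfl

end IsLatticeWord

theorem count_succ_lt_count_of_mem_of_isLatticeWord {w : List ℕ} {i : ℕ} (hi : 1 ≤ i)
    (hL : IsLatticeWord (w ++ w.reverse.map (· + 1)))
    (hlast : ∀ p : ℕ, w[p]? = some (2 * i - 1) → ∃ q, p < q ∧ w[q]? = some (2 * i))
    (hmem : 2 * i ∈ w) : w.count (2 * (i + 1)) < w.count (2 * i) := by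
  obtain ⟨u, v, rfl, hv⟩ := List.exists_eq_append_cons_notMem_of_mem hmem
  have hmarked : 2 * i - 1 ∉ v := List.notMem_of_forall_exists_later hv hlast
  have hprefix : (u ++ 2 * i :: v ++ v.reverse.map (· + 1)) ++ [2 * i + 1] <+:
      (u ++ 2 * i :: v) ++ (u ++ 2 * i :: v).reverse.map (· + 1) :=
    ⟨u.reverse.map (· + 1), by simp⟩
  have hstrict := hL.count_succ_lt_of_prefix hi hprefix
  have hshifted : (v.reverse.map (· + 1)).count (2 * i) = 0 := by
    rw [show 2 * i = (2 * i - 1) + 1 by omega,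
      List.count_map_of_injective _ _ (add_left_injective 1), List.count_reverse,
      List.count_eq_zero.2 hmarked]
  simp only [List.count_append, hshifted] at hstrict ⊢
  omega

theorem List.getD_map_range_sub {n k m : ℕ} (hm : m < n) :
    ((List.range n).map fun i => k - i).getD m 0 = k - m := by
  simp [List.getD_eq_getElem?_getD, hm]

theorem amenable_increasing_primes_general (μ : List ℕ) (T : ℕ × ℕ → ℕ) (k j : ℕ)
    (hT : IsAmenable μ.length (fun _ => 0) (fun r => μ.getD r 0) T)
    (hc : HasContent μ.length (fun _ => 0) (fun r => μ.getD r 0) T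
      ((List.range (j + 1)).map fun i => k - i)) :
    ∀ i : ℕ, 1 ≤ i → i ≤ j →
      (readingWord μ.length (fun _ => 0) (fun r => μ.getD r 0) T).count (2 * i - 1) ≤
      (readingWord μ.length (fun _ => 0) (fun r => μ.getD r 0) T).count (2 * (i + 1) - 1) := by
  intro i hi hij
  set w := readingWord μ.length (fun _ => 0) (fun r => μ.getD r 0) T
  obtain ⟨-, -, -, -, -, -, hL, hlast⟩ := hT
  have hcontent :
      ∀ m, 1 ≤ m → m ≤ j + 1 → w.count (2 * m) + w.count (2 * m - 1) = k - (m - 1) :=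
    fun m h1 h2 => by
      have := hc m h1
      rwa [contentAt, List.getD_map_range_sub (by omega)] at this
  have hci := hcontent i hi (by omega)
  have hci1 := hcontent (i + 1) (by omega) (by omega)
  rcases Nat.eq_zero_or_pos (w.count (2 * i - 1)) with hnone | hsome
  · omega
  obtain ⟨p, hp⟩ := List.mem_iff_getElem?.mp (List.count_pos_iff.mp hsome)
  obtain ⟨q, -, hq⟩ := hlast i hi p hp
  have hunmarked := count_succ_lt_count_of_mem_of_isLatticeWord (w := w) hi hL (hlast i hi)
    (List.mem_of_getElem? hq)
  omega

/-- Lemma 1.5 (increasing primes): if `T` is an amenable tableau with content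
`(k, k-1, …, k-j)` where `k > j ≥ 1`, then for `1 ≤ i ≤ j` the number of
marked letters i′ (encoded `2*i - 1`) in the reading word is at most the
number of marked letters (i+1)′ (encoded `2*(i+1) - 1`). -/
theorem amenable_increasing_primes (μ : List ℕ) (T : ℕ × ℕ → ℕ) (k j : ℕ)
    (hμ : IsPartitionList μ) (hj : 1 ≤ j) (hjk : j < k)
    (hT : IsAmenable μ.length (fun _ => 0) (fun r => μ.getD r 0) T)
    (hc : HasContent μ.length (fun _ => 0) (fun r => μ.getD r 0) T
      ((List.range (j + 1)).map fun i => k - i)) :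
    ∀ i : ℕ, 1 ≤ i → i ≤ j →
      (readingWord μ.length (fun _ => 0) (fun r => μ.getD r 0) T).count (2 * i - 1) ≤
      (readingWord μ.length (fun _ => 0) (fun r => μ.getD r 0) T).count (2 * (i + 1) - 1) :=
  amenable_increasing_primes_general μ T k j hT hc
end

section
/- Let λ be a strict partition of n and μ a partition of n. For every integer s with s ≥ λ_1 + 1, g_{λμ} ≤ g_{(λ∪s)(μ∪s)}. -/
/-!
If `μ₁ < s`, then `λ ∪ s = (s, λ)` and `μ ∪ s = (s, μ)`, and an injection of the amenable
tableaux of shape `μ` and content `λ` into those of shape `(s, μ)` and content `(s, λ)` is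
obtained by raising every entry by one unmarked step (`i ↦ i + 1`, `i′ ↦ (i + 1)′`) and adding a
top row of `s` letters `1`. The new word `w ŵ` is `1^s`, then the raised old word `w ŵ`, then
`2′^s`; it stays lattice because the raised old word contains only `λ₁ < s` letters `2`
(coming from the `1`s of `w` and the `1′`s of `w`, which `ŵ` turns into `1`s).

If `μ₁ ≥ s`, then `g_{λμ} = 0`: the first letter of a lattice word is `1′` or `1`, so by row
monotonicity the whole first row of an amenable tableau consists of `1′`s and `1`s, which
forces `λ₁ ≥ μ₁ ≥ s`.
-/

/-- The letter `x` may be read after the prefix `p` of a lattice word. -/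
def LatticeAdmissible (p : List ℕ) (x : ℕ) : Prop :=
  ∀ i : ℕ, 1 ≤ i → p.count (2 * i) = p.count (2 * (i + 1)) →
    x ≠ 2 * (i + 1) ∧ x ≠ 2 * i + 1

theorem isLatticeWord_nil : IsLatticeWord [] := by
  intro p x h
  simpa using h.length_le

theorem isLatticeWord_append_singleton {w : List ℕ} {x : ℕ} :
    IsLatticeWord (w ++ [x]) ↔ IsLatticeWord w ∧ LatticeAdmissible w x := by
  constructor
  · intro h
    exact ⟨fun p y hp => h p y (hp.trans (List.prefix_append w [x])),
      h w x (List.prefix_refl _)⟩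
  · rintro ⟨hw, hx⟩ p y hp
    rcases List.prefix_concat_iff.mp hp with h | h
    · obtain ⟨rfl, rfl⟩ := List.append_singleton_inj.mp h
      exact hx
    · exact hw p y h

theorem IsLatticeWord.head_le_two {x : ℕ} {w : List ℕ} (h : IsLatticeWord (x :: w)) :
    x ≤ 2 := by
  by_contra! hx
  have := h [] x ⟨w, rfl⟩ ((x - 1) / 2) (by omega) rfl
  omega

theorem latticeAdmissible_of_le_two {p : List ℕ} {x : ℕ} (hx : x ≤ 2) :
    LatticeAdmissible p x :=
  fun _ hi _ => ⟨by omega, by omega⟩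

theorem latticeAdmissible_three {p : List ℕ} (h : p.count 4 < p.count 2) :
    LatticeAdmissible p 3 := by
  intro i hi hc
  refine ⟨by omega, fun h3 => ?_⟩
  obtain rfl : i = 1 := by omega
  change p.count 2 = p.count 4 at hc
  omega

theorem count_map_add (w : List ℕ) (a k : ℕ) : (w.map (· + k)).count (a + k) = w.count a :=
  List.count_map_of_injective w _ (add_left_injective k) a

theorem LatticeAdmissible.replicate_append_map_add_two {p : List ℕ} {y s : ℕ}
    (h : LatticeAdmissible p y) (h0 : 0 ∉ p) (hs : p.count 2 < s) :
    LatticeAdmissible (List.replicate s 2 ++ p.map (· + 2)) (y + 2) := by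
  intro i hi hc
  have h2 : (p.map (· + 2)).count 2 = 0 := by
    simpa [List.count_eq_zero] using h0
  obtain rfl | hi := eq_or_lt_of_le hi
  · change (List.replicate s 2 ++ p.map (· + 2)).count 2 = _ at hc
    simp [List.count_replicate, h2, count_map_add p 2 2] at hc
    omega
  · obtain ⟨j, rfl⟩ : ∃ j, i = j + 2 := ⟨i - 2, by omega⟩
    rw [show 2 * (j + 2) = 2 * (j + 1) + 2 by ring,
      show 2 * (j + 2 + 1) = 2 * (j + 1 + 1) + 2 by ring] at hc ⊢
    simp [List.count_replicate, count_map_add] at hc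
    have := h (j + 1) (by omega) hc
    omega

theorem isLatticeWord_replicate_two (s : ℕ) : IsLatticeWord (List.replicate s 2) := by
  induction s with
  | zero => exact isLatticeWord_nil
  | succ s ih =>
    rw [List.replicate_succ', isLatticeWord_append_singleton]
    exact ⟨ih, latticeAdmissible_of_le_two le_rfl⟩

theorem IsLatticeWord.replicate_append_map_add_two {W : List ℕ} {s : ℕ} (hW : IsLatticeWord W)
    (h0 : 0 ∉ W) (hs : W.count 2 < s) :
    IsLatticeWord (List.replicate s 2 ++ W.map (· + 2)) := by
  induction W using List.reverseRecOn with
  | nil => simpa using isLatticeWord_replicate_two s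
  | append_singleton W y ih =>
    rw [isLatticeWord_append_singleton] at hW
    have h0W : 0 ∉ W := fun h => h0 (List.mem_append_left _ h)
    have hsW : W.count 2 < s := by rw [List.count_append] at hs; omega
    rw [List.map_append, List.map_singleton, ← List.append_assoc,
      isLatticeWord_append_singleton]
    exact ⟨ih hW.1 h0W hsW, hW.2.replicate_append_map_add_two h0W hsW⟩

theorem IsLatticeWord.append_replicate_three {w : List ℕ} (hw : IsLatticeWord w)
    (h : w.count 4 < w.count 2) (k : ℕ) : IsLatticeWord (w ++ List.replicate k 3) := by
  induction k with
  | zero => simpa using hw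
  | succ k ih =>
    rw [List.replicate_succ', ← List.append_assoc, isLatticeWord_append_singleton]
    exact ⟨ih, latticeAdmissible_three (by simpa [List.count_replicate] using h)⟩

theorem contentAt_append (u v : List ℕ) (i : ℕ) :
    contentAt (u ++ v) i = contentAt u i + contentAt v i := by
  simp only [contentAt, List.count_append]
  ring

theorem contentAt_one_of_forall_le_two {l : List ℕ} (h : ∀ x ∈ l, 1 ≤ x ∧ x ≤ 2) :
    contentAt l 1 = l.length := by
  induction l with
  | nil => rfl
  | cons x l ih =>
    obtain ⟨h1, h2⟩ := h x List.mem_cons_self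
    have := ih fun y hy => h y (List.mem_cons_of_mem x hy)
    simp only [contentAt, List.count_cons, List.length_cons, beq_iff_eq] at this ⊢
    split_ifs <;> omega

theorem contentAt_replicate_append_map_add_two_one {w : List ℕ} (h0 : 0 ∉ w) (s : ℕ) :
    contentAt (List.replicate s 2 ++ w.map (· + 2)) 1 = s := by
  have h2 : (w.map (· + 2)).count 2 = 0 := by simpa [List.count_eq_zero] using h0
  have h1 : (w.map (· + 2)).count 1 = 0 := by simp [List.count_eq_zero]
  simp [contentAt, List.count_replicate, h1, h2]

theorem contentAt_replicate_append_map_add_two_succ (w : List ℕ) (s : ℕ) {i : ℕ} (hi : 1 ≤ i) :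
    contentAt (List.replicate s 2 ++ w.map (· + 2)) (i + 1) = contentAt w i := by
  rw [contentAt, contentAt, show 2 * (i + 1) - 1 = (2 * i - 1) + 2 by omega,
    show 2 * (i + 1) = 2 * i + 2 by ring]
  simp only [List.count_append, List.count_replicate, count_map_add, beq_iff_eq]
  split_ifs <;> omega

theorem IsLatticeWord.replicate_append_map_add_two_augmented {w : List ℕ} {s : ℕ}
    (hw : IsLatticeWord (w ++ w.reverse.map (· + 1))) (h0 : 0 ∉ w) (hs : contentAt w 1 < s) :
    IsLatticeWord (List.replicate s 2 ++ w.map (· + 2) ++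
      (List.replicate s 2 ++ w.map (· + 2)).reverse.map (· + 1)) := by
  set W := w ++ w.reverse.map (· + 1)
  have hW0 : 0 ∉ W := by simp [W, h0]
  have hW2 : W.count 2 < s := by
    rwa [List.count_append, count_map_add _ 1 1, List.count_reverse]
  have h4 : (List.replicate s 2 ++ W.map (· + 2)).count 4 <
      (List.replicate s 2 ++ W.map (· + 2)).count 2 := by
    have hno2 : (W.map (· + 2)).count 2 = 0 := by simpa [List.count_eq_zero] using hW0
    rw [List.count_append, List.count_append, hno2, show 4 = 2 + 2 from rfl, count_map_add]
    simpa [List.count_replicate] using hW2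
  convert (hw.replicate_append_map_add_two hW0 hW2).append_replicate_three h4 s using 1
  simp [W]

def MarkedFollowedByUnmarked (w : List ℕ) : Prop :=
  ∀ i : ℕ, 1 ≤ i → ∀ p : ℕ, w[p]? = some (2 * i - 1) → ∃ q : ℕ, p < q ∧ w[q]? = some (2 * i)

theorem MarkedFollowedByUnmarked.replicate_append_map_add_two {w : List ℕ}
    (h : MarkedFollowedByUnmarked w) (s : ℕ) :
    MarkedFollowedByUnmarked (List.replicate s 2 ++ w.map (· + 2)) := by
  intro i hi p hp
  rcases lt_or_ge p s with hps | hps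
  · rw [List.getElem?_append_left (by simpa using hps), List.getElem?_replicate_of_lt hps] at hp
    have := Option.some.inj hp
    omega
  · rw [List.getElem?_append_right (by simpa using hps), List.length_replicate,
      List.getElem?_map, Option.map_eq_some_iff] at hp
    obtain ⟨y, hy, hyi⟩ := hp
    obtain ⟨q, hpq, hq⟩ := h (i - 1) (by omega) (p - s) (by rw [hy]; congr 1; omega)
    refine ⟨q + s, by omega, ?_⟩
    rw [List.getElem?_append_right (by simp), List.length_replicate, Nat.add_sub_cancel,
      List.getElem?_map, hq]
    simp only [Option.map_some]
    congr 1
    omega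

section ReadingWord

variable {L : ℕ} {lo hi : ℕ → ℕ} {T : ℕ × ℕ → ℕ}

theorem mem_readingWord_iff {x : ℕ} :
    x ∈ readingWord L lo hi T ↔ ∃ p, InDiagram L lo hi p ∧ T p = x := by
  simp only [readingWord, List.mem_flatMap, List.mem_range, List.mem_map, List.mem_reverse,
    List.mem_range', InDiagram, Prod.exists]
  constructor
  · rintro ⟨r, hr, c, ⟨j, hj, rfl⟩, rfl⟩
    exact ⟨r, lo r + 1 * j, ⟨hr, by omega, by omega⟩, rfl⟩
  · rintro ⟨r, c, ⟨hr, hlo, hhi⟩, rfl⟩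
    exact ⟨r, hr, c, ⟨c - lo r, by omega, by omega⟩, rfl⟩

theorem readingWord_congr {T' : ℕ × ℕ → ℕ} (h : ∀ p, InDiagram L lo hi p → T' p = T p) :
    readingWord L lo hi T' = readingWord L lo hi T := by
  refine List.flatMap_congr fun r hr => List.map_congr_left fun c hc => h _ ?_
  simp only [List.mem_reverse, List.mem_range'] at hc
  obtain ⟨j, hj, rfl⟩ := hc
  exact ⟨List.mem_range.mp hr, by dsimp only; omega, by dsimp only; omega⟩

theorem zero_notMem_readingWord (hpos : ∀ p, InDiagram L lo hi p → 1 ≤ T p) :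
    0 ∉ readingWord L lo hi T := fun h => by
  obtain ⟨p, hp, hp0⟩ := mem_readingWord_iff.mp h
  exact absurd (hpos p hp) (by omega)

theorem readingWord_comp (f : ℕ → ℕ) :
    readingWord L lo hi (f ∘ T) = (readingWord L lo hi T).map f := by
  simp only [readingWord, List.map_flatMap, List.map_map]
  rfl

theorem readingWord_succ :
    readingWord (L + 1) lo hi T =
      ((List.range' (lo 0) (hi 0 - lo 0)).reverse.map fun c => T (0, c)) ++
        readingWord L (fun r => lo (r + 1)) (fun r => hi (r + 1)) (fun p => T (p.1 + 1, p.2)) := by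
  rw [readingWord, List.range_succ_eq_map, List.flatMap_cons, List.flatMap_map]
  rfl

end ReadingWord

theorem readingWord_cons (m : ℕ) (mu : List ℕ) (T : ℕ × ℕ → ℕ) :
    readingWord (m :: mu).length (fun _ => 0) (fun r => (m :: mu).getD r 0) T =
      (List.range m).reverse.map (fun c => T (0, c)) ++
        readingWord mu.length (fun _ => 0) (fun r => mu.getD r 0) (fun p => T (p.1 + 1, p.2)) := by
  rw [List.length_cons, readingWord_succ, List.range_eq_range']
  rfl

/-- Add a top row of `s` unmarked letters 1 and raise every other entry by one unmarked step
(i ↦ i + 1, i′ ↦ (i + 1)′), keeping the entries `0` outside the diagram. -/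
def addRowOfOnes (s : ℕ) (T : ℕ × ℕ → ℕ) : ℕ × ℕ → ℕ
  | (0, c) => if c < s then 2 else 0
  | (r + 1, c) => if T (r, c) = 0 then 0 else T (r, c) + 2

theorem addRowOfOnes_injective (s : ℕ) : Function.Injective (addRowOfOnes s) := by
  intro T₁ T₂ h
  funext ⟨r, c⟩
  have := congrFun h (r + 1, c)
  simp only [addRowOfOnes] at this
  split_ifs at this <;> omega

section AddRowOfOnes

variable {mu : List ℕ} {s : ℕ} {T : ℕ × ℕ → ℕ}

theorem addRowOfOnes_zero {c : ℕ} (hc : c < s) : addRowOfOnes s T (0, c) = 2 := if_pos hc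

theorem addRowOfOnes_succ {r c : ℕ} (h : T (r, c) ≠ 0) :
    addRowOfOnes s T (r + 1, c) = T (r, c) + 2 :=
  if_neg h

theorem inDiagram_cons_zero {c : ℕ} :
    InDiagram (s :: mu).length (fun _ => 0) (fun r => (s :: mu).getD r 0) (0, c) ↔ c < s := by
  simp [InDiagram]

theorem inDiagram_cons_succ {r c : ℕ} :
    InDiagram (s :: mu).length (fun _ => 0) (fun r => (s :: mu).getD r 0) (r + 1, c) ↔
      InDiagram mu.length (fun _ => 0) (fun r => mu.getD r 0) (r, c) := by
  simp [InDiagram]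

theorem readingWord_addRowOfOnes
    (hpos : ∀ p, InDiagram mu.length (fun _ => 0) (fun r => mu.getD r 0) p → 1 ≤ T p) :
    readingWord (s :: mu).length (fun _ => 0) (fun r => (s :: mu).getD r 0) (addRowOfOnes s T) =
      List.replicate s 2 ++
        (readingWord mu.length (fun _ => 0) (fun r => mu.getD r 0) T).map (· + 2) := by
  rw [readingWord_cons, ← readingWord_comp]
  congr 1
  · simp [List.eq_replicate_iff, addRowOfOnes]
  · exact readingWord_congr fun _ hp => addRowOfOnes_succ (Nat.one_le_iff_ne_zero.mp (hpos _ hp))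

theorem isAmenable_addRowOfOnes
    (hT : IsAmenable mu.length (fun _ => 0) (fun r => mu.getD r 0) T)
    (hs : contentAt (readingWord mu.length (fun _ => 0) (fun r => mu.getD r 0) T) 1 < s) :
    IsAmenable (s :: mu).length (fun _ => 0) (fun r => (s :: mu).getD r 0)
      (addRowOfOnes s T) := by
  obtain ⟨hpos, hzero, hrow, hcol, hmarked, hunmarked, hlat, hlater⟩ := hT
  have hshift : ∀ {r c}, InDiagram mu.length (fun _ => 0) (fun r => mu.getD r 0) (r, c) →
      addRowOfOnes s T (r + 1, c) = T (r, c) + 2 := fun hp =>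
    addRowOfOnes_succ (Nat.one_le_iff_ne_zero.mp (hpos _ hp))
  refine ⟨?_, ?_, ?_, ?_, ?_, ?_, ?_, ?_⟩
  · rintro ⟨_ | r, c⟩ hp <;> simp only [inDiagram_cons_zero, inDiagram_cons_succ] at hp
    · simp [addRowOfOnes_zero hp]
    · simp [hshift hp]
  · rintro ⟨_ | r, c⟩ hp <;> simp only [inDiagram_cons_zero, inDiagram_cons_succ] at hp
    · simp [addRowOfOnes, hp]
    · simp [addRowOfOnes, hzero _ hp]
  · rintro (_ | r) c hp hp' <;> simp only [inDiagram_cons_zero, inDiagram_cons_succ] at hp hp'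
    · simp [addRowOfOnes_zero hp, addRowOfOnes_zero hp']
    · simp [hshift hp, hshift hp', hrow r c hp hp']
  · rintro (_ | r) c hp hp' <;> simp only [inDiagram_cons_zero, inDiagram_cons_succ] at hp hp'
    · simp [addRowOfOnes_zero hp, hshift hp']
    · simp [hshift hp, hshift hp', hcol r c hp hp']
  · rintro (_ | r) c₁ c₂ i hi hne hp₁ hp₂ ⟨h₁, h₂⟩ <;>
      simp only [inDiagram_cons_zero, inDiagram_cons_succ] at hp₁ hp₂
    · rw [addRowOfOnes_zero hp₁] at h₁
      omega
    · rw [hshift hp₁] at h₁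
      rw [hshift hp₂] at h₂
      exact hmarked r c₁ c₂ (i - 1) (by omega) hne hp₁ hp₂ ⟨by omega, by omega⟩
  · -- the new top row holds only unmarked `1`s, all raised entries are larger
    rintro (_ | r₁) (_ | r₂) c i hi hne hp₁ hp₂ ⟨h₁, h₂⟩ <;>
      simp only [inDiagram_cons_zero, inDiagram_cons_succ] at hp₁ hp₂
    · exact hne rfl
    · have := hpos _ hp₂
      rw [addRowOfOnes_zero hp₁] at h₁
      rw [hshift hp₂] at h₂
      omega
    · have := hpos _ hp₁
      rw [hshift hp₁] at h₁
      rw [addRowOfOnes_zero hp₂] at h₂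
      omega
    · have := hpos _ hp₁
      rw [hshift hp₁] at h₁
      rw [hshift hp₂] at h₂
      exact hunmarked r₁ r₂ c (i - 1) (by omega) (by simpa using hne) hp₁ hp₂ ⟨by omega, by omega⟩
  · rw [augWord, readingWord_addRowOfOnes hpos]
    exact hlat.replicate_append_map_add_two_augmented (zero_notMem_readingWord hpos) hs
  · rw [readingWord_addRowOfOnes hpos]
    exact MarkedFollowedByUnmarked.replicate_append_map_add_two hlater s

theorem hasContent_addRowOfOnes {lam : List ℕ}
    (hpos : ∀ p, InDiagram mu.length (fun _ => 0) (fun r => mu.getD r 0) p → 1 ≤ T p)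
    (hT : HasContent mu.length (fun _ => 0) (fun r => mu.getD r 0) T lam) :
    HasContent (s :: mu).length (fun _ => 0) (fun r => (s :: mu).getD r 0) (addRowOfOnes s T)
      (s :: lam) := by
  intro i hi
  rw [readingWord_addRowOfOnes hpos]
  obtain rfl | hi := eq_or_lt_of_le hi
  · simpa using contentAt_replicate_append_map_add_two_one (zero_notMem_readingWord hpos) s
  · obtain ⟨j, rfl⟩ : ∃ j, i = j + 1 := ⟨i - 1, by omega⟩
    rw [contentAt_replicate_append_map_add_two_succ _ _ (by omega), hT j (by omega)]
    obtain ⟨k, rfl⟩ : ∃ k, j = k + 1 := ⟨j - 1, by omega⟩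
    simp

end AddRowOfOnes

theorem addRowOfOnes_mem_gSet {lam mu : List ℕ} {s : ℕ} {T : ℕ × ℕ → ℕ} (hs : lam.getD 0 0 < s)
    (hT : T ∈ gSet lam mu) : addRowOfOnes s T ∈ gSet (s :: lam) (s :: mu) :=
  ⟨isAmenable_addRowOfOnes hT.1 (by rwa [hT.2 1 le_rfl]), hasContent_addRowOfOnes hT.1.1 hT.2⟩

theorem finite_setOf_supported_bounded (L : ℕ) (lo hi : ℕ → ℕ) (B : ℕ) :
    {T : ℕ × ℕ → ℕ | (∀ p, ¬ InDiagram L lo hi p → T p = 0) ∧ ∀ p, T p ≤ B}.Finite := by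
  let cell : (Σ r : Fin L, Fin (hi r - lo r)) → ℕ × ℕ := fun q => (q.1, lo q.1 + q.2)
  refine Set.Finite.of_finite_image (f := fun T => T ∘ cell) ?_ ?_
  · refine (Set.Finite.pi (t := fun _ => Set.Iic B) fun _ => Set.finite_Iic B).subset ?_
    rintro _ ⟨T, ⟨-, hB⟩, rfl⟩ q -
    exact hB _
  · rintro T₁ ⟨h₁, -⟩ T₂ ⟨h₂, -⟩ h
    funext ⟨r, c⟩
    by_cases hp : InDiagram L lo hi (r, c)
    · obtain ⟨hr, hlo, hhi⟩ : r < L ∧ lo r ≤ c ∧ c < hi r := hp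
      have := congrFun h ⟨⟨r, hr⟩, ⟨c - lo r, show c - lo r < hi r - lo r by omega⟩⟩
      simpa [cell, Nat.add_sub_cancel' hlo] using this
    · rw [h₁ _ hp, h₂ _ hp]

theorem le_two_mul_length_of_mem_readingWord {L : ℕ} {lo hi : ℕ → ℕ} {T : ℕ × ℕ → ℕ}
    {lam : List ℕ} (hT : HasContent L lo hi T lam) {x : ℕ} (hx : x ∈ readingWord L lo hi T) :
    x ≤ 2 * lam.length := by
  rcases Nat.eq_zero_or_pos x with rfl | hx0
  · exact Nat.zero_le _
  set i := (x + 1) / 2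
  have hcontent : 0 < contentAt (readingWord L lo hi T) i := by
    have := List.count_pos_iff.mpr hx
    rcases Nat.even_or_odd x with ⟨k, rfl⟩ | ⟨k, rfl⟩
    · rw [contentAt, show i = k by omega, show 2 * k = k + k by ring]
      omega
    · rw [contentAt, show i = k + 1 by omega, show 2 * (k + 1) - 1 = 2 * k + 1 by omega]
      omega
  rw [hT i (by omega)] at hcontent
  have : i - 1 < lam.length := by
    by_contra! h
    rw [List.getD_eq_default _ _ h] at hcontent
    exact hcontent.ne rfl
  omega

theorem gSet_finite (lam mu : List ℕ) : (gSet lam mu).Finite := by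
  refine (finite_setOf_supported_bounded mu.length (fun _ => 0) (fun r => mu.getD r 0)
    (2 * lam.length)).subset fun T ⟨hT, hc⟩ => ⟨hT.2.1, fun p => ?_⟩
  by_cases hp : InDiagram mu.length (fun _ => 0) (fun r => mu.getD r 0) p
  · exact le_two_mul_length_of_mem_readingWord hc (mem_readingWord_iff.mpr ⟨p, hp, rfl⟩)
  · simp [hT.2.1 p hp]

theorem IsAmenable.row_mono {L : ℕ} {lo hi : ℕ → ℕ} {T : ℕ × ℕ → ℕ} (hT : IsAmenable L lo hi T)
    {r c₁ c₂ : ℕ} (hr : r < L) (hc₁ : lo r ≤ c₁) (h : c₁ ≤ c₂) (hc₂ : c₂ < hi r) :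
    T (r, c₁) ≤ T (r, c₂) := by
  induction c₂, h using Nat.le_induction with
  | base => exact le_rfl
  | succ c₂ h ih =>
    exact (ih (by omega)).trans (hT.2.2.1 r c₂ (show r < L ∧ lo r ≤ c₂ ∧ c₂ < hi r by omega)
      (show r < L ∧ lo r ≤ c₂ + 1 ∧ c₂ + 1 < hi r by omega))

theorem IsAmenable.top_row_le_two {m : ℕ} {mu : List ℕ} {T : ℕ × ℕ → ℕ}
    (hT : IsAmenable (m :: mu).length (fun _ => 0) (fun r => (m :: mu).getD r 0) T) {c : ℕ}
    (hc : c < m) : T (0, c) ≤ 2 := by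
  obtain ⟨k, rfl⟩ : ∃ k, m = k + 1 := ⟨m - 1, by omega⟩
  have hlast : T (0, k) ≤ 2 := by
    have hlat := hT.2.2.2.2.2.2.1
    rw [augWord, readingWord_cons, List.range_succ] at hlat
    exact IsLatticeWord.head_le_two (by simpa using hlat)
  exact (hT.row_mono (by simp) (Nat.zero_le c) (by omega) (by simp)).trans hlast

theorem getD_zero_le_of_mem_gSet {lam mu : List ℕ} {T : ℕ × ℕ → ℕ} (hT : T ∈ gSet lam mu) :
    mu.getD 0 0 ≤ lam.getD 0 0 := by
  obtain ⟨hA, hC⟩ := hT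
  cases mu with
  | nil => simp
  | cons m mu =>
    have htop : contentAt ((List.range m).reverse.map fun c => T (0, c)) 1 = m := by
      rw [contentAt_one_of_forall_le_two, List.length_map, List.length_reverse, List.length_range]
      simp only [List.mem_map, List.mem_reverse, List.mem_range]
      rintro _ ⟨c, hc, rfl⟩
      exact ⟨hA.1 _ (inDiagram_cons_zero.mpr hc), hA.top_row_le_two hc⟩
    have := hC 1 le_rfl
    rw [readingWord_cons, contentAt_append, htop, Nat.sub_self] at this
    simp only [List.getD_cons_zero]
    omega

theorem insertPart_of_getD_zero_lt {l : List ℕ} {s : ℕ} (h : l.getD 0 0 < s) :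
    insertPart l s = s :: l := by
  cases l with
  | nil => rfl
  | cons a l =>
    have : ¬ s ≤ a := by simpa using h
    simp [insertPart, this]

theorem gCoeff_le_insertPart_general (lam mu : List ℕ) (s : ℕ)
    (hs : lam.getD 0 0 + 1 ≤ s) :
    gCoeff lam mu ≤ gCoeff (insertPart lam s) (insertPart mu s) := by
  rcases lt_or_ge (mu.getD 0 0) s with hmu | hmu
  · rw [insertPart_of_getD_zero_lt hs, insertPart_of_getD_zero_lt hmu]
    exact Set.ncard_le_ncard_of_injOn (addRowOfOnes s) (fun T hT => addRowOfOnes_mem_gSet hs hT)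
      (addRowOfOnes_injective s).injOn (gSet_finite _ _)
  · have hempty : gSet lam mu = ∅ := Set.eq_empty_of_forall_notMem fun T hT => by
      have := getD_zero_le_of_mem_gSet hT
      omega
    simp [gCoeff, hempty]

/-- Lemma 2.3, second inequality: for a strict partition `λ` of `n`, a partition
`μ` of `n` and `s ≥ λ_1 + 1`, we have `g_{λμ} ≤ g_{(λ∪s)(μ∪s)}`. -/
theorem gCoeff_le_insertPart (n : ℕ) (lam mu : List ℕ) (s : ℕ)
    (hlam : IsStrictPartitionList lam) (hlamn : lam.sum = n)
    (hmu : IsPartitionList mu) (hmun : mu.sum = n)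
    (hs : lam.getD 0 0 + 1 ≤ s) :
    gCoeff lam mu ≤ gCoeff (insertPart lam s) (insertPart mu s) :=
  gCoeff_le_insertPart_general lam mu s hs
end

section
/- For every k ≥ 2 and every partition μ of 2k−1, g_{(k,k−1)μ} ≤ 1. That is, for each shape μ there is at most one amenable tableau of shape μ and content (k, k−1). -/
/-!
Only the letters `1' < 1 < 2' < 2` (encoded `1, 2, 3, 4`) occur. The lattice condition at the
first letter of `w(T)` leaves only `1'` and `1` in the top row, and a `1'` or `1` in a cell
`(r, c)` with `r, c ≥ 1` would force two `1'` into the top row or two `1` into column `c`. So the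
`k` letters `1'`, `1` fill the top row and rows `1, …, L` of the first column, `L = k - μ₁`.
The row and column conditions and the condition on the rightmost `i'` then fix every entry
except those in the cells `(r, 1)` with `1 ≤ r ≤ L`; a `2` there would leave rows `0, …, r`
with more letters `1'` than `2'`, which breaks the lattice condition where `ŵ(T)` reaches
`(r, 0)`. Hence every amenable tableau of content `(k, k - 1)` is one explicit filling.
-/

open Finset

lemma IsLatticeWord.count_le {w p : List ℕ} (hw : IsLatticeWord w) (hp : p <+: w) {i : ℕ}
    (hi : 1 ≤ i) : p.count (2 * (i + 1)) ≤ p.count (2 * i) := by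
  induction p using List.reverseRecOn with
  | nil => simp
  | append_singleton p x ih =>
    have hle := ih ((List.prefix_append p [x]).trans hp)
    have hx := hw p x hp i hi
    simp only [List.count_append, List.count_singleton, beq_iff_eq]
    split_ifs <;> omega

lemma IsLatticeWord.head {x : ℕ} {l : List ℕ} (hw : IsLatticeWord (x :: l)) {i : ℕ}
    (hi : 1 ≤ i) : x ≠ 2 * (i + 1) ∧ x ≠ 2 * i + 1 :=
  hw [] x (by simp) i hi (by simp)

lemma List.count_two_add_count_one {l : List ℕ} (hl : ∀ x ∈ l, 1 ≤ x) :
    l.count 2 + l.count 1 = l.countP (· ≤ 2) := by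
  induction l with
  | nil => rfl
  | cons x l ih =>
    have hx := hl x List.mem_cons_self
    have := ih fun y hy => hl y (List.mem_cons_of_mem x hy)
    simp only [List.count_cons, List.countP_cons, beq_iff_eq, decide_eq_true_eq]
    split_ifs <;> omega

lemma Finset.mem_iff_lt_card_of_isLowerSet {S : Finset ℕ} (hS : IsLowerSet (S : Set ℕ))
    {a : ℕ} : a ∈ S ↔ a < #S := by
  constructor
  · intro ha
    calc a < #(range (a + 1)) := by simp
      _ ≤ #S := card_le_card fun b hb => hS (Nat.lt_succ_iff.1 (mem_range.1 hb)) ha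
  · intro ha
    by_contra hna
    have hsub : S ⊆ range a := fun b hb =>
      mem_range.2 (lt_of_not_ge fun hab => hna (hS hab hb))
    have := card_le_card hsub
    simp only [card_range] at this
    omega

namespace StraightShape

def rowLen (mu : List ℕ) (r : ℕ) : ℕ := mu.getD r 0

def IsCell (mu : List ℕ) (r c : ℕ) : Prop := r < mu.length ∧ c < rowLen mu r

def rowWord (mu : List ℕ) (T : ℕ × ℕ → ℕ) (r : ℕ) : List ℕ :=
  (List.range (rowLen mu r)).reverse.map fun c => T (r, c)

def rowsWord (mu : List ℕ) (T : ℕ × ℕ → ℕ) (n : ℕ) : List ℕ :=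
  (List.range n).flatMap (rowWord mu T)

def rowsFrom (mu : List ℕ) (T : ℕ × ℕ → ℕ) (n : ℕ) : List ℕ :=
  ((List.range (mu.length - n)).map (n + ·)).flatMap (rowWord mu T)

def word (mu : List ℕ) (T : ℕ × ℕ → ℕ) : List ℕ := rowsWord mu T mu.length

variable {mu : List ℕ} {T : ℕ × ℕ → ℕ} {r c k : ℕ}

lemma inDiagram_iff {p : ℕ × ℕ} :
    InDiagram mu.length (fun _ => 0) (fun r => mu.getD r 0) p ↔ IsCell mu p.1 p.2 := by
  simp [InDiagram, IsCell, rowLen]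

lemma readingWord_eq_word :
    readingWord mu.length (fun _ => 0) (fun r => mu.getD r 0) T = word mu T := by
  simp only [readingWord, word, rowsWord, ← List.range_eq_range', Nat.sub_zero]
  rfl

lemma rowLen_pos (hmu : ∀ x ∈ mu, 0 < x) (hr : r < mu.length) : 0 < rowLen mu r := by
  rw [rowLen, List.getD_eq_getElem _ _ hr]
  exact hmu _ (List.getElem_mem hr)

lemma rowLen_antitone (hmu : mu.Pairwise (· ≥ ·)) : Antitone (rowLen mu) := by
  intro r r' hrr
  rcases hrr.eq_or_lt with rfl | hlt
  · exact le_rfl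
  by_cases hr' : r' < mu.length
  · rw [rowLen, rowLen, List.getD_eq_getElem _ _ hr', List.getD_eq_getElem _ _ (hlt.trans hr')]
    exact List.pairwise_iff_getElem.1 hmu r r' (hlt.trans hr') hr' hlt
  · simp [rowLen, List.getElem?_eq_none (not_lt.1 hr')]

lemma IsCell.mono (hmu : mu.Pairwise (· ≥ ·)) {r' c' : ℕ} (h : IsCell mu r c) (hr : r' ≤ r)
    (hc : c' ≤ c) : IsCell mu r' c' :=
  ⟨hr.trans_lt h.1, hc.trans_lt (h.2.trans_le (rowLen_antitone hmu hr))⟩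

lemma IsCell.col_zero (h : IsCell mu r c) : IsCell mu r 0 := ⟨h.1, by have := h.2; omega⟩

lemma rowsWord_succ (n : ℕ) : rowsWord mu T (n + 1) = rowsWord mu T n ++ rowWord mu T n := by
  simp [rowsWord, List.range_succ]

lemma word_eq_append {n : ℕ} (hn : n ≤ mu.length) :
    word mu T = rowsWord mu T n ++ rowsFrom mu T n := by
  rw [word, rowsWord, rowsWord, rowsFrom, ← List.flatMap_append, ← List.range_add,
    Nat.add_sub_cancel' hn]

lemma exists_rowWord_eq_append (hr : 0 < rowLen mu r) :
    ∃ u, rowWord mu T r = u ++ [T (r, 0)] := by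
  obtain ⟨n, hn⟩ := Nat.exists_eq_add_of_lt hr
  refine ⟨(List.range n).reverse.map fun c => T (r, c + 1), ?_⟩
  simp [rowWord, hn, List.range_succ_eq_map]

lemma exists_rowWord_eq_cons (hr : 0 < rowLen mu r) :
    ∃ u, rowWord mu T r = T (r, rowLen mu r - 1) :: u := by
  obtain ⟨n, hn⟩ := Nat.exists_eq_add_of_lt hr
  refine ⟨(List.range n).reverse.map fun c => T (r, c), ?_⟩
  simp [rowWord, hn, List.range_succ]

lemma exists_of_mem_rowsFrom {n x : ℕ} (hx : x ∈ rowsFrom mu T n) :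
    ∃ r c, n ≤ r ∧ IsCell mu r c ∧ x = T (r, c) := by
  simp only [rowsFrom, rowWord, List.mem_flatMap, List.mem_map, List.mem_range,
    List.mem_reverse] at hx
  obtain ⟨_, ⟨j, hj, rfl⟩, c, hc, rfl⟩ := hx
  exact ⟨n + j, c, by omega, ⟨by omega, hc⟩, rfl⟩

lemma mem_word (h : IsCell mu r c) : T (r, c) ∈ word mu T := by
  simp only [word, rowsWord, rowWord, List.mem_flatMap, List.mem_map, List.mem_range,
    List.mem_reverse]
  exact ⟨r, h.1, c, h.2, rfl⟩

lemma countP_rowWord (p : ℕ → Bool) (r : ℕ) :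
    (rowWord mu T r).countP p = #{c ∈ range (rowLen mu r) | p (T (r, c))} := by
  rw [rowWord, List.countP_map, List.countP_reverse, ← Nat.count_eq_card_filter_range, Nat.count]
  simp [Function.comp_def]

lemma countP_rowsWord (p : ℕ → Bool) (n : ℕ) :
    (rowsWord mu T n).countP p = ∑ r ∈ range n, (rowWord mu T r).countP p := by
  induction n with
  | zero => simp [rowsWord]
  | succ n ih => rw [rowsWord_succ, List.countP_append, ih, sum_range_succ]

lemma count_rowsWord (v n : ℕ) :
    (rowsWord mu T n).count v = ∑ r ∈ range n, (rowWord mu T r).count v :=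
  countP_rowsWord _ n

lemma countP_rowWord_of_iff {p : ℕ → Bool} {c₀ : ℕ} {P : Prop} [Decidable P]
    (hc₀ : c₀ < rowLen mu r) (hp : ∀ c < rowLen mu r, p (T (r, c)) ↔ c = c₀ ∧ P) :
    (rowWord mu T r).countP p = if P then 1 else 0 := by
  rw [countP_rowWord]
  split_ifs with hP
  · rw [card_eq_one]
    refine ⟨c₀, ?_⟩
    ext c
    simp only [mem_filter, mem_range, mem_singleton]
    constructor
    · exact fun hc => ((hp c hc.1).1 hc.2).1
    · rintro rfl; exact ⟨hc₀, (hp _ hc₀).2 ⟨rfl, hP⟩⟩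
  · rw [card_eq_zero, filter_eq_empty_iff]
    exact fun c hc hpc => hP ((hp c (mem_range.1 hc)).1 hpc).2

lemma exists_word_eq_of_isCell (hcell : IsCell mu r 0) :
    ∃ u, rowsWord mu T (r + 1) = u ++ [T (r, 0)] ∧
      word mu T = u ++ T (r, 0) :: rowsFrom mu T (r + 1) := by
  obtain ⟨u, hu⟩ := exists_rowWord_eq_append (T := T) hcell.2
  refine ⟨rowsWord mu T r ++ u, by rw [rowsWord_succ, hu, List.append_assoc], ?_⟩
  rw [word_eq_append hcell.1, rowsWord_succ, hu]
  simp

lemma exists_of_mem_word {x : ℕ} (hx : x ∈ word mu T) :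
    ∃ r c, IsCell mu r c ∧ x = T (r, c) := by
  rw [word_eq_append (Nat.zero_le _)] at hx
  obtain ⟨r, c, -, hcell, rfl⟩ := exists_of_mem_rowsFrom (by simpa [rowsWord] using hx)
  exact ⟨r, c, hcell, rfl⟩

/-- `p` is `w(T)` followed by the part of `ŵ(T)` coming from the rows below `r`. -/
lemma exists_prefix_row_end (hcell : IsCell mu r 0) :
    ∃ p, p ++ [T (r, 0) + 1] <+: word mu T ++ (word mu T).reverse.map (· + 1) ∧
      ∀ a, p.count (a + 1) + (rowsWord mu T (r + 1)).count a =
        (word mu T).count (a + 1) + (word mu T).count a := by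
  obtain ⟨u, hu, hw⟩ := exists_word_eq_of_isCell (T := T) hcell
  refine ⟨word mu T ++ (rowsFrom mu T (r + 1)).reverse.map (· + 1), ?_, fun a => ?_⟩
  · refine ⟨u.reverse.map (· + 1), ?_⟩
    rw [hw]
    simp
  · have hinj : Function.Injective (· + 1 : ℕ → ℕ) := add_left_injective 1
    rw [hu, hw]
    simp only [List.count_append, List.count_reverse, List.count_map_of_injective _ _ hinj,
      List.count_cons, List.count_nil]
    omega

structure IsAmenableTableau (mu : List ℕ) (T : ℕ × ℕ → ℕ) : Prop where
  partition : IsPartitionList mu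
  pos : ∀ {r c}, IsCell mu r c → 1 ≤ T (r, c)
  zero : ∀ {r c}, ¬ IsCell mu r c → T (r, c) = 0
  row_mono : ∀ {r c}, IsCell mu r (c + 1) → T (r, c) ≤ T (r, c + 1)
  col_mono : ∀ {r c}, IsCell mu (r + 1) c → T (r, c) ≤ T (r + 1, c)
  row_marked : ∀ {r c₁ c₂ i}, 1 ≤ i → c₁ ≠ c₂ → IsCell mu r c₁ → IsCell mu r c₂ →
    T (r, c₁) = 2 * i - 1 → T (r, c₂) ≠ 2 * i - 1
  col_unmarked : ∀ {r₁ r₂ c i}, 1 ≤ i → r₁ ≠ r₂ → IsCell mu r₁ c → IsCell mu r₂ c →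
    T (r₁, c) = 2 * i → T (r₂, c) ≠ 2 * i
  lattice : IsLatticeWord (word mu T ++ (word mu T).reverse.map (· + 1))
  marked_followed : ∀ {i p : ℕ}, 1 ≤ i → (word mu T)[p]? = some (2 * i - 1) →
    ∃ q, p < q ∧ (word mu T)[q]? = some (2 * i)

lemma IsAmenableTableau.of_isAmenable (hmu : IsPartitionList mu)
    (h : IsAmenable mu.length (fun _ => 0) (fun r => mu.getD r 0) T) :
    IsAmenableTableau mu T := by
  obtain ⟨h₁, h₂, h₃, h₄, h₅, h₆, h₇, h₈⟩ := h
  simp only [inDiagram_iff, augWord, readingWord_eq_word] at h₁ h₂ h₃ h₄ h₅ h₆ h₇ h₈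
  refine ⟨hmu, fun hc => h₁ _ hc, fun hc => h₂ _ hc,
    fun hc => h₃ _ _ (hc.mono hmu.1 le_rfl (Nat.le_succ _)) hc,
    fun hc => h₄ _ _ (hc.mono hmu.1 (Nat.le_succ _) le_rfl) hc,
    fun hi hne hc₁ hc₂ he₁ he₂ => h₅ _ _ _ _ hi hne hc₁ hc₂ ⟨he₁, he₂⟩,
    fun hi hne hc₁ hc₂ he₁ he₂ => h₆ _ _ _ _ hi hne hc₁ hc₂ ⟨he₁, he₂⟩, h₇,
    fun hi hp => h₈ _ hi _ hp⟩

namespace IsAmenableTableau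

lemma isCell_col_zero (h : IsAmenableTableau mu T) (hr : r < mu.length) : IsCell mu r 0 :=
  ⟨hr, rowLen_pos h.partition.2 hr⟩

lemma entry_mono_row (h : IsAmenableTableau mu T) {c' : ℕ} (hcell : IsCell mu r c')
    (hc : c ≤ c') : T (r, c) ≤ T (r, c') := by
  induction c', hc using Nat.le_induction with
  | base => exact le_rfl
  | succ n _ ih =>
    exact (ih (hcell.mono h.partition.1 le_rfl (Nat.le_succ n))).trans (h.row_mono hcell)

lemma entry_mono_col (h : IsAmenableTableau mu T) {r' : ℕ} (hcell : IsCell mu r' c)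
    (hr : r ≤ r') : T (r, c) ≤ T (r', c) := by
  induction r', hr using Nat.le_induction with
  | base => exact le_rfl
  | succ n _ ih =>
    exact (ih (hcell.mono h.partition.1 (Nat.le_succ n) le_rfl)).trans (h.col_mono hcell)

lemma entry_mono (h : IsAmenableTableau mu T) {r' c' : ℕ} (hcell : IsCell mu r' c')
    (hr : r ≤ r') (hc : c ≤ c') : T (r, c) ≤ T (r', c') :=
  (h.entry_mono_row (hcell.mono h.partition.1 hr le_rfl) hc).trans (h.entry_mono_col hcell hr)

lemma entry_end_row_zero_ne (h : IsAmenableTableau mu T) (hm : 0 < mu.length) :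
    T (0, rowLen mu 0 - 1) ≠ 4 ∧ T (0, rowLen mu 0 - 1) ≠ 3 := by
  obtain ⟨u, hu⟩ := exists_rowWord_eq_cons (T := T) (rowLen_pos h.partition.2 hm)
  have hw : word mu T = T (0, rowLen mu 0 - 1) :: (u ++ rowsFrom mu T 1) := by
    rw [word_eq_append hm, rowsWord_succ, hu]
    simp [rowsWord]
  have hlat := h.lattice
  rw [hw, List.cons_append] at hlat
  exact hlat.head le_rfl

lemma three_le_entry (h : IsAmenableTableau mu T) (hcell : IsCell mu r c) (hr : 1 ≤ r)
    (hc₁ : 1 ≤ c) : 3 ≤ T (r, c) := by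
  by_contra hlt
  have hmono := h.partition.1
  have h₀ : IsCell mu 0 c := hcell.mono hmono (Nat.zero_le _) le_rfl
  have h₀' : IsCell mu 0 (c - 1) := hcell.mono hmono (Nat.zero_le _) (Nat.sub_le _ _)
  have h₁ : IsCell mu 1 c := hcell.mono hmono hr le_rfl
  have := h.entry_mono hcell hr le_rfl
  have : T (0, c) ≤ T (1, c) := h.col_mono h₁
  have := h.entry_mono_row h₀ (Nat.sub_le c 1)
  have := h.pos h₀'
  obtain h₀₁ | h₀₂ : T (0, c) = 1 ∨ T (0, c) = 2 := by omega
  · exact h.row_marked le_rfl (by omega) h₀' h₀ (by omega) (by omega)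
  · exact h.col_unmarked le_rfl (by omega) h₀ h₁ (by omega) (by omega)

lemma count_le_of_row_end (h : IsAmenableTableau mu T) (hcell : IsCell mu r 0) :
    (word mu T).count 4 + (word mu T).count 3 + (rowsWord mu T (r + 1)).count 1 ≤
      (word mu T).count 2 + (word mu T).count 1 + (rowsWord mu T (r + 1)).count 3 := by
  obtain ⟨p, hp, hcount⟩ := exists_prefix_row_end (T := T) hcell
  have hle : p.count 4 ≤ p.count 2 :=
    h.lattice.count_le ((List.prefix_append p _).trans hp) le_rfl
  have h₁ : p.count 2 + _ = (word mu T).count 2 + _ := hcount 1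
  have h₃ : p.count 4 + _ = (word mu T).count 4 + _ := hcount 3
  omega

lemma entry_row_end_of_count_eq (h : IsAmenableTableau mu T) (hcell : IsCell mu r 0)
    (heq : (word mu T).count 4 + (word mu T).count 3 + (rowsWord mu T (r + 1)).count 1 =
      (word mu T).count 2 + (word mu T).count 1 + (rowsWord mu T (r + 1)).count 3) :
    T (r, 0) ≠ 2 ∧ T (r, 0) ≠ 3 := by
  obtain ⟨p, hp, hcount⟩ := exists_prefix_row_end (T := T) hcell
  have h₁ : p.count 2 + _ = (word mu T).count 2 + _ := hcount 1
  have h₃ : p.count 4 + _ = (word mu T).count 4 + _ := hcount 3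
  have : T (r, 0) + 1 ≠ 4 ∧ T (r, 0) + 1 ≠ 3 :=
    h.lattice p _ hp 1 le_rfl (show p.count 2 = p.count 4 by omega)
  omega

lemma mem_rowsFrom_of_marked (h : IsAmenableTableau mu T) (hcell : IsCell mu r 0) {i : ℕ}
    (hi : 1 ≤ i) (hT : T (r, 0) = 2 * i - 1) : 2 * i ∈ rowsFrom mu T (r + 1) := by
  obtain ⟨u, -, hw⟩ := exists_word_eq_of_isCell (T := T) hcell
  obtain ⟨q, hq, hget⟩ := h.marked_followed (p := u.length) hi (by simp [hw, hT])
  obtain ⟨j, rfl⟩ := Nat.exists_eq_add_of_lt hq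
  rw [hw, List.getElem?_append_right (by omega), show u.length + j + 1 - u.length = j + 1 by omega,
    List.getElem?_cons_succ] at hget
  exact List.mem_of_getElem? hget

end IsAmenableTableau

structure HasTwoRowContent (k : ℕ) (mu : List ℕ) (T : ℕ × ℕ → ℕ) : Prop where
  count_one : (word mu T).count 2 + (word mu T).count 1 = k
  count_two : (word mu T).count 4 + (word mu T).count 3 = k - 1
  le_four : ∀ x ∈ word mu T, x ≤ 4

lemma HasTwoRowContent.of_hasContent
    (hc : HasContent mu.length (fun _ => 0) (fun r => mu.getD r 0) T [k, k - 1]) :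
    HasTwoRowContent k mu T := by
  simp only [HasContent, readingWord_eq_word, contentAt] at hc
  refine ⟨by simpa using hc 1 le_rfl, by simpa using hc 2 (by norm_num), fun x hx => ?_⟩
  by_contra hx4
  have h0 := hc ((x + 1) / 2) (by omega)
  rw [List.getD_eq_default _ _ (by simp; omega)] at h0
  have hx0 : (word mu T).count x = 0 := by
    obtain hx' | hx' : 2 * ((x + 1) / 2) = x ∨ 2 * ((x + 1) / 2) - 1 = x := by omega
    all_goals rw [hx'] at h0; omega
  exact List.count_eq_zero.1 hx0 hx

lemma HasTwoRowContent.entry_le_four (hc : HasTwoRowContent k mu T) (hcell : IsCell mu r c) :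
    T (r, c) ≤ 4 :=
  hc.le_four _ (mem_word hcell)

def lastOneRow (k : ℕ) (mu : List ℕ) : ℕ := k - rowLen mu 0

namespace IsAmenableTableau

lemma entry_row_zero_le_two (h : IsAmenableTableau mu T) (hc : HasTwoRowContent k mu T)
    (hcell : IsCell mu 0 c) : T (0, c) ≤ 2 := by
  have hlen := hcell.2
  have hlast : IsCell mu 0 (rowLen mu 0 - 1) := ⟨hcell.1, by omega⟩
  have := h.entry_mono hlast le_rfl (show c ≤ rowLen mu 0 - 1 by omega)
  have := h.entry_end_row_zero_ne hcell.1
  have := hc.entry_le_four hlast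
  omega

/-- The `k` letters `1'`, `1` fill the top row and otherwise lie in the first column. -/
lemma card_filter_col_zero_le_two (h : IsAmenableTableau mu T) (hc : HasTwoRowContent k mu T)
    (hm : 0 < mu.length) : #{r ∈ range mu.length | T (r, 0) ≤ 2} + rowLen mu 0 = k + 1 := by
  obtain ⟨n, hn⟩ : ∃ n, mu.length = n + 1 := ⟨mu.length - 1, by omega⟩
  have hrow : ∀ r ∈ range n, (rowWord mu T (r + 1)).countP (· ≤ 2) =
      if T (r + 1, 0) ≤ 2 then 1 else 0 := by
    intro r hr
    have hr' : r + 1 < mu.length := by simp at hr; omega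
    refine countP_rowWord_of_iff (h.isCell_col_zero hr').2 fun c hc' => ?_
    rcases Nat.eq_zero_or_pos c with rfl | hc₁
    · simp
    · have := h.three_le_entry ⟨hr', hc'⟩ (Nat.le_add_left 1 r) hc₁
      simp only [decide_eq_true_eq]
      omega
  have hrow₀ : (rowWord mu T 0).countP (· ≤ 2) = rowLen mu 0 := by
    rw [countP_rowWord, filter_true_of_mem fun c hc' => ?_, card_range]
    simpa using h.entry_row_zero_le_two hc ⟨hm, mem_range.1 hc'⟩
  have hk := hc.count_one
  rw [List.count_two_add_count_one fun x hx => ?_, word, countP_rowsWord, hn, sum_range_succ',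
    sum_congr rfl hrow, hrow₀] at hk
  · rw [card_filter, hn, sum_range_succ',
      if_pos (h.entry_row_zero_le_two hc (h.isCell_col_zero hm))]
    omega
  · obtain ⟨r, c, hcell, rfl⟩ := exists_of_mem_word hx
    exact h.pos hcell

lemma entry_col_zero_le_two_iff (h : IsAmenableTableau mu T) (hc : HasTwoRowContent k mu T)
    (hr : r < mu.length) : T (r, 0) ≤ 2 ↔ r ≤ lastOneRow k mu := by
  have hm : 0 < mu.length := by omega
  have hcard := h.card_filter_col_zero_le_two hc hm
  have hS : IsLowerSet (({r ∈ range mu.length | T (r, 0) ≤ 2} : Finset ℕ) : Set ℕ) := by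
    intro a b hba ha
    simp only [coe_filter, mem_range, Set.mem_ofPred_eq] at ha ⊢
    exact ⟨by omega, (h.entry_mono_col (h.isCell_col_zero ha.1) hba).trans ha.2⟩
  have h₀ := (mem_iff_lt_card_of_isLowerSet hS (a := 0)).1
    (mem_filter.2 ⟨mem_range.2 hm, h.entry_row_zero_le_two hc (h.isCell_col_zero hm)⟩)
  have hiff := mem_iff_lt_card_of_isLowerSet hS (a := r)
  simp only [mem_filter, mem_range, hr, true_and] at hiff
  rw [hiff, lastOneRow]
  omega

lemma lastOneRow_lt_length (h : IsAmenableTableau mu T) (hc : HasTwoRowContent k mu T)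
    (hm : 0 < mu.length) : lastOneRow k mu < mu.length := by
  have hcard := h.card_filter_col_zero_le_two hc hm
  have := card_filter_le (range mu.length) fun r => T (r, 0) ≤ 2
  rw [card_range] at this
  rw [lastOneRow]
  omega

lemma entry_lastOneRow (h : IsAmenableTableau mu T) (hc : HasTwoRowContent k mu T)
    (hm : 0 < mu.length) : T (lastOneRow k mu, 0) = 2 := by
  have hL := h.lastOneRow_lt_length hc hm
  have hle := (h.entry_col_zero_le_two_iff hc hL).2 le_rfl
  have hpos := h.pos (h.isCell_col_zero hL)
  by_contra hne
  obtain ⟨ρ, c, hρ, hcell, he⟩ := exists_of_mem_rowsFrom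
    (h.mem_rowsFrom_of_marked (h.isCell_col_zero hL) le_rfl (i := 1) (by omega))
  rcases Nat.eq_zero_or_pos c with rfl | hc₁
  · have := (h.entry_col_zero_le_two_iff hc hcell.1).not.2 (by omega)
    omega
  · have := h.three_le_entry hcell (by omega) hc₁
    omega

lemma entry_col_zero_of_lt (h : IsAmenableTableau mu T) (hc : HasTwoRowContent k mu T)
    (hm : 0 < mu.length) (hr : r < lastOneRow k mu) : T (r, 0) = 1 := by
  have hL := h.lastOneRow_lt_length hc hm
  have hcell := h.isCell_col_zero (hr.trans hL)
  have hle := (h.entry_col_zero_le_two_iff hc hcell.1).2 hr.le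
  have hpos := h.pos hcell
  by_contra hne
  exact h.col_unmarked le_rfl hr.ne hcell (h.isCell_col_zero hL) (by omega)
    (h.entry_lastOneRow hc hm)

lemma entry_row_zero (h : IsAmenableTableau mu T) (hc : HasTwoRowContent k mu T)
    (hcell : IsCell mu 0 c) (hc₁ : 1 ≤ c) : T (0, c) = 2 := by
  have hcell₀ := hcell.col_zero
  have hle := h.entry_row_zero_le_two hc hcell
  have := h.entry_mono_row hcell (Nat.zero_le c)
  have := h.pos hcell₀
  by_contra hne
  exact h.row_marked le_rfl (by omega) hcell₀ hcell (by omega) (by omega)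

lemma eq_four_of_three_le_left (h : IsAmenableTableau mu T) (hc : HasTwoRowContent k mu T)
    (hcell : IsCell mu r (c + 1)) (h₃ : 3 ≤ T (r, c)) : T (r, c + 1) = 4 := by
  have := h.row_mono hcell
  have := hc.entry_le_four hcell
  by_contra hne
  exact h.row_marked (i := 2) (by norm_num) (by omega)
    (hcell.mono h.partition.1 le_rfl (Nat.le_succ c)) hcell (by omega) (by omega)

lemma eq_three_of_isCell_below (h : IsAmenableTableau mu T) (hc : HasTwoRowContent k mu T)
    (hcell : IsCell mu (r + 1) c) (h₃ : 3 ≤ T (r, c)) : T (r, c) = 3 := by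
  have := h.col_mono hcell
  have := hc.entry_le_four hcell
  by_contra hne
  exact h.col_unmarked (i := 2) (by norm_num) (by omega)
    (hcell.mono h.partition.1 (Nat.le_succ r) le_rfl) hcell (by omega) (by omega)

lemma eq_four_of_last_row (h : IsAmenableTableau mu T) (hc : HasTwoRowContent k mu T)
    (hr : r + 1 = mu.length) (h₃ : 3 ≤ T (r, 0)) : T (r, 0) = 4 := by
  have hcell := h.isCell_col_zero (show r < mu.length by omega)
  have := hc.entry_le_four hcell
  by_contra hne
  have hmem := h.mem_rowsFrom_of_marked hcell (i := 2) (by norm_num) (by omega)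
  simp [rowsFrom, ← hr] at hmem

lemma entry_of_entry_col_one_eq_four (h : IsAmenableTableau mu T)
    (hc : HasTwoRowContent k mu T) (hcell : IsCell mu r 1) (hrL : r ≤ lastOneRow k mu)
    (h₄ : T (r, 1) = 4) {ρ c : ℕ} (hρ : ρ ≤ r) (hcρ : c < rowLen mu ρ) :
    T (ρ, c) = if c = 0 then (if ρ < lastOneRow k mu then 1 else 2) else if ρ = 0 then 2
      else if c = 1 ∧ ρ < r then 3 else 4 := by
  have hm : 0 < mu.length := by have := hcell.1; omega
  have hmono := h.partition.1
  have hcellρ : IsCell mu ρ c := ⟨by have := hcell.1; omega, hcρ⟩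
  rcases Nat.eq_zero_or_pos c with rfl | hc₁
  · rcases lt_or_eq_of_le (hρ.trans hrL) with hlt | rfl
    · simp [hlt, h.entry_col_zero_of_lt hc hm hlt]
    · simpa using h.entry_lastOneRow hc hm
  rcases Nat.eq_zero_or_pos ρ with rfl | hρ₁
  · simp [h.entry_row_zero hc hcellρ hc₁, hc₁.ne']
  have h₃ : 3 ≤ T (ρ, c) := h.three_le_entry hcellρ hρ₁ hc₁
  obtain rfl | hc₂ : c = 1 ∨ 2 ≤ c := by omega
  · rcases lt_or_eq_of_le hρ with hlt | rfl
    · simp [hlt, hρ₁.ne', h.eq_three_of_isCell_below hc (hcell.mono hmono hlt le_rfl) h₃]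
    · simp [h₄, hρ₁.ne']
  · obtain ⟨c, rfl⟩ : ∃ c', c = c' + 1 := ⟨c - 1, by omega⟩
    rw [h.eq_four_of_three_le_left hc hcellρ
      (h.three_le_entry (hcellρ.mono hmono le_rfl (Nat.le_succ c)) hρ₁ (by omega))]
    simp [hρ₁.ne']
    omega

lemma count_one_rowsWord_of_entry_col_one_eq_four (h : IsAmenableTableau mu T)
    (hc : HasTwoRowContent k mu T) (hcell : IsCell mu r 1) (hrL : r ≤ lastOneRow k mu)
    (h₄ : T (r, 1) = 4) : (rowsWord mu T (r + 1)).count 1 = min (r + 1) (lastOneRow k mu) := by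
  have hrow : ∀ ρ ∈ range (r + 1),
      (rowWord mu T ρ).count 1 = if ρ < lastOneRow k mu then 1 else 0 := by
    intro ρ hρ
    have hρ' : ρ ≤ r := Nat.lt_succ_iff.1 (mem_range.1 hρ)
    refine countP_rowWord_of_iff (hcell.mono h.partition.1 hρ' (Nat.zero_le 1)).2 fun c hc' => ?_
    rw [beq_iff_eq, h.entry_of_entry_col_one_eq_four hc hcell hrL h₄ hρ' hc']
    split_ifs <;> omega
  rw [count_rowsWord, sum_congr rfl hrow, sum_boole, Nat.cast_id, ← card_range (min _ _)]
  congr 1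
  ext ρ
  simp only [mem_filter, mem_range]
  omega

lemma count_three_rowsWord_of_entry_col_one_eq_four (h : IsAmenableTableau mu T)
    (hc : HasTwoRowContent k mu T) (hcell : IsCell mu r 1) (hrL : r ≤ lastOneRow k mu)
    (h₄ : T (r, 1) = 4) : (rowsWord mu T (r + 1)).count 3 = r - 1 := by
  have hrow : ∀ ρ ∈ range (r + 1),
      (rowWord mu T ρ).count 3 = if 1 ≤ ρ ∧ ρ < r then 1 else 0 := by
    intro ρ hρ
    have hρ' : ρ ≤ r := Nat.lt_succ_iff.1 (mem_range.1 hρ)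
    refine countP_rowWord_of_iff (hcell.mono h.partition.1 hρ' le_rfl).2 fun c hc' => ?_
    rw [beq_iff_eq, h.entry_of_entry_col_one_eq_four hc hcell hrL h₄ hρ' hc']
    split_ifs <;> omega
  rw [count_rowsWord, sum_congr rfl hrow, sum_boole, Nat.cast_id, ← Nat.card_Ico 1 r]
  congr 1
  ext ρ
  simp only [mem_filter, mem_range, mem_Ico]
  omega

/-- Were `(r, 1)` an unmarked `2`, the rows `0, …, r` would hold `min (r + 1) L` letters `1'`
but only `r - 1` letters `2'`, and the lattice condition fails where `ŵ(T)` reaches `(r, 0)`. -/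
lemma entry_col_one (h : IsAmenableTableau mu T) (hc : HasTwoRowContent k mu T)
    (hcell : IsCell mu r 1) (hr : 1 ≤ r) (hrL : r ≤ lastOneRow k mu) : T (r, 1) = 3 := by
  have hk : 1 ≤ k := by unfold lastOneRow at hrL; omega
  by_contra hne
  have h₄ : T (r, 1) = 4 := by
    have := h.three_le_entry hcell hr le_rfl
    have := hc.entry_le_four hcell
    omega
  have hu₁ := h.count_one_rowsWord_of_entry_col_one_eq_four hc hcell hrL h₄
  have hu₃ := h.count_three_rowsWord_of_entry_col_one_eq_four hc hcell hrL h₄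
  have hle := h.count_le_of_row_end hcell.col_zero
  have hk₁ := hc.count_one
  have hk₂ := hc.count_two
  obtain rfl : r = lastOneRow k mu := by omega
  exact (h.entry_row_end_of_count_eq hcell.col_zero (by omega)).1
    (h.entry_lastOneRow hc (by have := hcell.1; omega))

end IsAmenableTableau

/-- `L` is the row of the `1` in the first column and `m` the number of rows. -/
def expectedEntry (L m r c : ℕ) : ℕ :=
  if c = 0 then (if r < L then 1 else if r = L then 2 else if r + 1 < m then 3 else 4)
  else if r = 0 then 2 else if c = 1 ∧ r ≤ L then 3 else 4

lemma IsAmenableTableau.eq_expectedEntry (h : IsAmenableTableau mu T)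
    (hc : HasTwoRowContent k mu T) (hcell : IsCell mu r c) :
    T (r, c) = expectedEntry (lastOneRow k mu) mu.length r c := by
  have hm : 0 < mu.length := by have := hcell.1; omega
  have hcol := h.entry_col_zero_le_two_iff hc hcell.1
  unfold expectedEntry
  rcases Nat.eq_zero_or_pos c with rfl | hc₁
  · rw [if_pos rfl]
    split_ifs with hlt heq hnext
    · exact h.entry_col_zero_of_lt hc hm hlt
    · exact heq ▸ h.entry_lastOneRow hc hm
    · exact h.eq_three_of_isCell_below hc (h.isCell_col_zero hnext) (by omega)
    · exact h.eq_four_of_last_row hc (by have := hcell.1; omega) (by omega)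
  obtain ⟨c, rfl⟩ : ∃ c', c = c' + 1 := ⟨c - 1, by omega⟩
  rw [if_neg (Nat.succ_ne_zero c)]
  split_ifs with h₀ h₁
  · exact h₀ ▸ h.entry_row_zero hc (h₀ ▸ hcell) hc₁
  · obtain ⟨rfl, hrL⟩ : c = 0 ∧ r ≤ lastOneRow k mu := ⟨by omega, h₁.2⟩
    exact h.entry_col_one hc hcell (by omega) hrL
  · refine h.eq_four_of_three_le_left hc hcell ?_
    rcases Nat.eq_zero_or_pos c with rfl | hc'
    · omega
    · exact h.three_le_entry (hcell.mono h.partition.1 le_rfl (Nat.le_succ c)) (by omega) hc'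

theorem subsingleton_gSet (hmu : IsPartitionList mu) : (gSet [k, k - 1] mu).Subsingleton := by
  intro T hT T' hT'
  have h := IsAmenableTableau.of_isAmenable hmu hT.1
  have h' := IsAmenableTableau.of_isAmenable hmu hT'.1
  have hc := HasTwoRowContent.of_hasContent hT.2
  have hc' := HasTwoRowContent.of_hasContent hT'.2
  funext ⟨r, c⟩
  by_cases hcell : IsCell mu r c
  · rw [h.eq_expectedEntry hc hcell, h'.eq_expectedEntry hc' hcell]
  · rw [h.zero hcell, h'.zero hcell]

end StraightShape

theorem gCoeff_two_row_multfree_general (k : ℕ) :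
    ∀ mu : List ℕ, IsPartitionList mu → mu.sum = 2 * k - 1 →
      gCoeff [k, k - 1] mu ≤ 1 := by
  intro mu hmu _
  have hsub := StraightShape.subsingleton_gSet (k := k) hmu
  exact (Set.ncard_le_one hsub.finite).2 fun _ hT _ hT' => hsub hT hT'

/-- For every `k ≥ 2` and every partition `μ` of `2k - 1`, there is at most one
amenable tableau of shape `μ` and content `(k, k-1)`; i.e. `P_{(k,k-1)}` is
multiplicity free. -/
theorem gCoeff_two_row_multfree (k : ℕ) (hk : 2 ≤ k) :
    ∀ mu : List ℕ, IsPartitionList mu → mu.sum = 2 * k - 1 →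
      gCoeff [k, k - 1] mu ≤ 1 :=
  gCoeff_two_row_multfree_general k
end

section
/- Let λ = (m, k, k−1, …, 2, 1) with m ≥ k+1 ≥ 2 (a near staircase whose top row exceeds a staircase of length k). Then every amenable tableau T with content λ contains no marked letter i' with i > 1, and consequently g_{λμ} ≤ 1 for every partition μ of m + k(k+1)/2. -/
/-!
For `i ≥ 2` the content of `λ` drops by exactly one from `i` to `i + 1`. If a tableau had a
letter `i′`, its rightmost `i` would lie to the right of every `i′`; reading the augmented word
up to the `(i+1)′` coming from that `i`, the lattice property forces strictly more `i`'s than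
`(i+1)`'s, and a drop of one leaves no room for an `i′`. Descending from the largest letters, no
`i′` with `i ≥ 2` occurs.

Such a tableau is rigid: by the lattice property an unmarked `v` in row `r` has `v ≤ r`, and
column strictness then forces every cell of row `r` outside the first column to hold `r`. The
first column is weakly increasing, so it is determined by the multiset of its entries, which the
content fixes once one knows that the first column holds exactly one unmarked `1`. Hence the
tableau is determined by its shape and content.
-/

namespace IsLatticeWord

variable {W : List ℕ}

theorem count_le_s15 (hW : IsLatticeWord W) {Q : List ℕ} (hQ : Q <+: W) {i : ℕ} (hi : 1 ≤ i) :
    Q.count (2 * (i + 1)) ≤ Q.count (2 * i) := by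
  induction Q using List.reverseRecOn with
  | nil => simp
  | append_singleton Q a ih =>
    have ih := ih ((List.prefix_append Q [a]).trans hQ)
    have hstep := hW Q a hQ i hi
    simp only [List.count_append, List.count_singleton, beq_iff_eq]
    split_ifs <;> omega

theorem count_lt (hW : IsLatticeWord W) {Q : List ℕ} {x i : ℕ} (hQ : Q ++ [x] <+: W)
    (hi : 1 ≤ i) (hx : x = 2 * (i + 1) ∨ x = 2 * i + 1) :
    Q.count (2 * (i + 1)) < Q.count (2 * i) := by
  have hle := hW.count_le_s15 ((List.prefix_append Q [x]).trans hQ) hi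
  have hne := hW Q x hQ i hi
  omega

end IsLatticeWord

/-- Condition (6) of amenability. -/
def RightmostUnmarked (w : List ℕ) : Prop :=
  ∀ i : ℕ, 1 ≤ i → ∀ p : ℕ, w[p]? = some (2 * i - 1) →
    ∃ q : ℕ, p < q ∧ w[q]? = some (2 * i)

theorem mem_of_getElem?_append_cons {α : Type*} {A S : List α} {x y : α} {q : ℕ}
    (hq : A.length < q) (h : (A ++ x :: S)[q]? = some y) : y ∈ S := by
  rw [List.getElem?_append_right hq.le, show q - A.length = (q - A.length - 1) + 1 by omega,
    List.getElem?_cons_succ] at h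
  exact List.mem_of_getElem? h

theorem RightmostUnmarked.mem_of_eq_append {w A S : List ℕ} {i : ℕ} (hw : RightmostUnmarked w)
    (hi : 1 ≤ i) (hsplit : w = A ++ (2 * i - 1) :: S) : 2 * i ∈ S := by
  subst hsplit
  obtain ⟨q, hq, hwq⟩ := hw i hi A.length (by simp)
  exact mem_of_getElem?_append_cons hq hwq

theorem count_succ_lt_of_marked_mem {w : List ℕ}
    (hlat : IsLatticeWord (w ++ w.reverse.map (· + 1))) (hmk : RightmostUnmarked w) {i : ℕ}
    (hi : 1 ≤ i) (hmarked : 2 * i - 1 ∈ w) : w.count (2 * (i + 1)) < w.count (2 * i) := by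
  have hunmarked : 2 * i ∈ w := by
    obtain ⟨A, S, hsplit⟩ := List.append_of_mem hmarked
    exact hsplit ▸ List.mem_append_right A
      (List.mem_cons_of_mem _ (hmk.mem_of_eq_append hi hsplit))
  obtain ⟨A, S, hsplit, hS⟩ : ∃ A S, w = A ++ 2 * i :: S ∧ 2 * i - 1 ∉ S := by
    obtain ⟨B, A, hrev, hB⟩ := List.eq_append_cons_of_mem (List.mem_reverse.2 hunmarked)
    refine ⟨A.reverse, B.reverse, by simpa using congrArg List.reverse hrev, fun hmem => ?_⟩
    obtain ⟨S₁, S₂, hS⟩ := List.append_of_mem hmem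
    have hsplit : w = (A.reverse ++ 2 * i :: S₁) ++ (2 * i - 1) :: S₂ := by
      simpa [hS] using congrArg List.reverse hrev
    exact hB (List.mem_reverse.1 (hS ▸ List.mem_append_right S₁
      (List.mem_cons_of_mem _ (hmk.mem_of_eq_append hi hsplit))))
  -- in the augmented word, the rightmost `i` becomes the `(i+1)′` that follows `Q`
  set Q := w ++ S.reverse.map (· + 1)
  have hQ : Q ++ [2 * i + 1] <+: w ++ w.reverse.map (· + 1) :=
    ⟨A.reverse.map (· + 1), by simp [Q, hsplit]⟩
  have hlt := hlat.count_lt hQ hi (Or.inr rfl)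
  have hshift : (S.reverse.map (· + 1)).count (2 * i) = 0 :=
    List.count_eq_zero.2 fun h => hS (by
      obtain ⟨a, ha, hai⟩ := List.mem_map.1 h
      exact (show a = 2 * i - 1 by omega) ▸ List.mem_reverse.1 ha)
  simp only [Q, List.count_append] at hlt hshift
  omega

theorem count_marked_eq_zero_of_contentAt_le {w : List ℕ}
    (hlat : IsLatticeWord (w ++ w.reverse.map (· + 1))) (hmk : RightmostUnmarked w) {i₀ : ℕ}
    (h₀ : 1 ≤ i₀) (hc : ∀ i, i₀ ≤ i → contentAt w i ≤ contentAt w (i + 1) + 1) :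
    ∀ i, i₀ ≤ i → w.count (2 * i - 1) = 0 := by
  suffices h : ∀ d i, i₀ ≤ i → w.sum < i + d → w.count (2 * i - 1) = 0 from
    fun i hi => h w.sum.succ i hi (by omega)
  intro d
  induction d with
  | zero =>
    intro i _ hi
    exact List.count_eq_zero.2 fun h => by have := List.le_sum_of_mem h; omega
  | succ d ih =>
    intro i hi hd
    have hnext := ih (i + 1) (by omega) (by omega)
    by_contra hne
    have hlt := count_succ_lt_of_marked_mem hlat hmk (by omega)
      (List.count_pos_iff.1 (Nat.pos_of_ne_zero hne))
    have := hc i hi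
    unfold contentAt at this
    omega

def NoMarkedAboveOne (w : List ℕ) : Prop :=
  ∀ i, 2 ≤ i → w.count (2 * i - 1) = 0

theorem count_eq_of_contentAt_eq {w w' : List ℕ}
    (hc : ∀ i, 1 ≤ i → contentAt w i = contentAt w' i)
    (hm : NoMarkedAboveOne w) (hm' : NoMarkedAboveOne w')
    {t : ℕ} (ht : 3 ≤ t) : w.count t = w'.count t := by
  obtain ⟨i, rfl | rfl⟩ := Nat.even_or_odd' t
  · have := hc i (by omega)
    unfold contentAt at this
    have := hm i (by omega)
    have := hm' i (by omega)
    omega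
  · rw [show 2 * i + 1 = 2 * (i + 1) - 1 by omega, hm _ (by omega), hm' _ (by omega)]

theorem staircase_getD (k j : ℕ) : (staircase k).getD j 0 = k - j := by
  simp only [staircase, List.getD_eq_getElem?_getD, List.getElem?_map]
  by_cases h : j < k
  · simp [List.getElem?_range h]
  · rw [List.getElem?_eq_none (by simpa using h)]
    simp only [Option.map_none, Option.getD_none]
    omega

theorem IsAmenable.noMarkedAboveOne_of_hasContent_cons_staircase {nrows : ℕ} {lo hi : ℕ → ℕ}
    {T : ℕ × ℕ → ℕ} {m k : ℕ} (hA : IsAmenable nrows lo hi T)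
    (hC : HasContent nrows lo hi T (m :: staircase k)) :
    NoMarkedAboveOne (readingWord nrows lo hi T) := by
  obtain ⟨-, -, -, -, -, -, hlat, hmk⟩ := hA
  refine count_marked_eq_zero_of_contentAt_le hlat hmk (i₀ := 2) (by norm_num) fun j hj => ?_
  obtain ⟨j, rfl⟩ : ∃ j', j = j' + 2 := ⟨j - 2, by omega⟩
  rw [hC _ (by omega), hC _ (by omega)]
  simp only [show j + 2 - 1 = j + 1 by omega, show j + 1 + 2 - 1 = j + 2 by omega,
    List.getD_cons_succ, staircase_getD]
  omega

section ReadingOrder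

variable {nrows : ℕ} {lo hi : ℕ → ℕ} {T : ℕ × ℕ → ℕ}

def readingCells (nrows : ℕ) (lo hi : ℕ → ℕ) : List (ℕ × ℕ) :=
  (List.range nrows).flatMap fun r =>
    ((List.range' (lo r) (hi r - lo r)).reverse).map fun c => (r, c)

def ReadsBefore (p q : ℕ × ℕ) : Prop :=
  p.1 < q.1 ∨ p.1 = q.1 ∧ q.2 < p.2

theorem readingWord_eq_map : readingWord nrows lo hi T = (readingCells nrows lo hi).map T := by
  simp [readingWord, readingCells, List.map_flatMap, Function.comp_def]

theorem mem_readingCells {p : ℕ × ℕ} :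
    p ∈ readingCells nrows lo hi ↔ InDiagram nrows lo hi p := by
  obtain ⟨r, c⟩ := p
  simp only [readingCells, List.mem_flatMap, List.mem_range, List.mem_map, List.mem_reverse,
    List.mem_range'_1, Prod.mk.injEq, InDiagram]
  constructor
  · rintro ⟨r, hr, c, hc, rfl, rfl⟩
    exact ⟨hr, hc.1, by omega⟩
  · rintro ⟨hr, hc₁, hc₂⟩
    exact ⟨r, hr, c, ⟨hc₁, by omega⟩, rfl, rfl⟩

theorem pairwise_readsBefore_readingCells : (readingCells nrows lo hi).Pairwise ReadsBefore := by
  refine List.pairwise_flatMap.2 ⟨fun r _ => ?_, ?_⟩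
  · simp only [List.pairwise_map, List.pairwise_reverse, ReadsBefore, lt_irrefl, true_and,
      false_or]
    exact List.pairwise_lt_range'
  · refine List.pairwise_lt_range.imp fun hr => ?_
    simp only [List.mem_map]
    rintro _ ⟨c, -, rfl⟩ _ ⟨c', -, rfl⟩
    exact Or.inl hr

theorem mem_readingWord {p : ℕ × ℕ} (hp : InDiagram nrows lo hi p) :
    T p ∈ readingWord nrows lo hi T :=
  readingWord_eq_map ▸ List.mem_map_of_mem (mem_readingCells.2 hp)

theorem exists_readingWord_eq_append {p : ℕ × ℕ} (hp : InDiagram nrows lo hi p) :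
    ∃ P S : List (ℕ × ℕ), readingWord nrows lo hi T = P.map T ++ T p :: S.map T ∧
      (∀ q ∈ P, InDiagram nrows lo hi q ∧ ReadsBefore q p) ∧
      (∀ q ∈ S, InDiagram nrows lo hi q ∧ ReadsBefore p q) := by
  obtain ⟨P, S, hsplit⟩ := List.append_of_mem (mem_readingCells.2 hp)
  have hpair := hsplit ▸ pairwise_readsBefore_readingCells (nrows := nrows) (lo := lo) (hi := hi)
  have hmem : ∀ q, q ∈ P ∨ q ∈ S → InDiagram nrows lo hi q := fun q hq =>
    mem_readingCells.1 (hsplit ▸ by rcases hq with hq | hq <;> simp [hq])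
  rw [List.pairwise_append, List.pairwise_cons] at hpair
  refine ⟨P, S, by simp [readingWord_eq_map, hsplit], fun q hq => ⟨hmem q (Or.inl hq), ?_⟩,
    fun q hq => ⟨hmem q (Or.inr hq), hpair.2.1.1 q hq⟩⟩
  exact hpair.2.2 q hq p List.mem_cons_self

end ReadingOrder

namespace IsAmenable

variable {nrows : ℕ} {lo hi : ℕ → ℕ} {T : ℕ × ℕ → ℕ}

theorem row_mono_s15 (hA : IsAmenable nrows lo hi T) {r c c' : ℕ}
    (hc : InDiagram nrows lo hi (r, c)) (hc' : InDiagram nrows lo hi (r, c')) (h : c ≤ c') :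
    T (r, c) ≤ T (r, c') := by
  obtain ⟨-, -, hrow, -⟩ := hA
  induction c', h using Nat.le_induction with
  | base => exact le_rfl
  | succ c' hcc' ih =>
    have hmid : InDiagram nrows lo hi (r, c') :=
      ⟨hc.1, le_trans hc.2.1 hcc', Nat.lt_of_succ_lt hc'.2.2⟩
    exact (ih hmid).trans (hrow r c' hmid hc')

theorem ne_one_of_col_lt (hA : IsAmenable nrows lo hi T) {r c₀ c : ℕ}
    (hc₀ : InDiagram nrows lo hi (r, c₀)) (hc : InDiagram nrows lo hi (r, c)) (hlt : c₀ < c) :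
    T (r, c) ≠ 1 := fun h1 =>
  hA.2.2.2.2.1 r c₀ c 1 le_rfl hlt.ne hc₀ hc
    ⟨by have := hA.1 _ hc₀; have := hA.row_mono_s15 hc₀ hc hlt.le; omega, h1⟩

theorem exists_row_lt_of_eq_two_mul_succ (hA : IsAmenable nrows lo hi T) {p : ℕ × ℕ}
    (hp : InDiagram nrows lo hi p) {v : ℕ} (hv : 1 ≤ v) (hTp : T p = 2 * (v + 1)) :
    ∃ q, InDiagram nrows lo hi q ∧ q.1 < p.1 ∧ T q = 2 * v := by
  obtain ⟨P, S, hsplit, hP, -⟩ := exists_readingWord_eq_append (T := T) hp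
  have hprefix : P.map T ++ [T p] <+: readingWord nrows lo hi T ++ augWord nrows lo hi T :=
    List.IsPrefix.trans ⟨S.map T, by simp [hsplit]⟩ (List.prefix_append _ _)
  have hlt := hA.2.2.2.2.2.2.1.count_lt hprefix hv (Or.inl hTp)
  have hpos : 0 < (P.map T).count (2 * v) := by omega
  obtain ⟨q, hq, hTq⟩ := List.mem_map.1 (List.count_pos_iff.1 hpos)
  obtain ⟨hqd, hrow | ⟨hrow, hcol⟩⟩ := hP q hq
  · exact ⟨q, hqd, hrow, hTq⟩
  · obtain ⟨r, c⟩ := p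
    obtain ⟨r', c'⟩ := q
    simp only at hrow hcol
    subst hrow
    have := hA.row_mono_s15 hp hqd hcol.le
    omega

theorem le_row_add_one_of_eq_two_mul (hA : IsAmenable nrows lo hi T) :
    ∀ v {p : ℕ × ℕ}, InDiagram nrows lo hi p → T p = 2 * v → v ≤ p.1 + 1
  | 0, _, _, _ | 1, _, _, _ => by omega
  | v + 2, _, hp, hTp => by
    obtain ⟨q, hq, hqp, hTq⟩ := hA.exists_row_lt_of_eq_two_mul_succ hp (by omega) hTp
    have := hA.le_row_add_one_of_eq_two_mul (v + 1) hq hTq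
    omega

theorem count_zero_readingWord (hA : IsAmenable nrows lo hi T) :
    (readingWord nrows lo hi T).count 0 = 0 :=
  List.count_eq_zero.2 fun h => by
    obtain ⟨p, hp, hp0⟩ := List.mem_map.1 (readingWord_eq_map ▸ h)
    exact absurd (hA.1 p (mem_readingCells.1 hp)) (by omega)

theorem eq_one_or_eq_two_mul (hA : IsAmenable nrows lo hi T)
    (hnm : NoMarkedAboveOne (readingWord nrows lo hi T)) {p : ℕ × ℕ}
    (hp : InDiagram nrows lo hi p) :
    T p = 1 ∨ ∃ v, 1 ≤ v ∧ v ≤ p.1 + 1 ∧ T p = 2 * v := by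
  have hpos := hA.1 p hp
  obtain ⟨v, hv | hv⟩ := Nat.even_or_odd' (T p)
  · exact Or.inr ⟨v, by omega, hA.le_row_add_one_of_eq_two_mul v hp hv, hv⟩
  · refine Or.inl (by_contra fun h1 => ?_)
    have hmem := mem_readingWord (T := T) hp
    rw [show T p = 2 * (v + 1) - 1 by omega] at hmem
    exact List.count_eq_zero.1 (hnm (v + 1) (by omega)) hmem

end IsAmenable

section StraightShape

variable {mu : List ℕ} {T T' : ℕ × ℕ → ℕ}

theorem IsPartitionList.inDiagram_of_le (hmu : IsPartitionList mu) {r r' c c' : ℕ}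
    (h : InDiagram mu.length (fun _ => 0) (fun r => mu.getD r 0) (r', c')) (hr : r ≤ r')
    (hc : c ≤ c') : InDiagram mu.length (fun _ => 0) (fun r => mu.getD r 0) (r, c) := by
  obtain ⟨hr', -, hc'⟩ := h
  simp only at hr' hc'
  refine ⟨by omega, Nat.zero_le _, ?_⟩
  rcases hr.eq_or_lt with rfl | hlt
  · exact lt_of_le_of_lt hc hc'
  · have := List.pairwise_iff_getElem.1 hmu.1 r r' (by omega) hr' hlt
    rw [List.getD_eq_getElem _ _ hr'] at hc'
    simp only [List.getD_eq_getElem _ _ (lt_trans hlt hr')]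
    omega

theorem IsAmenable.col_mono (hmu : IsPartitionList mu)
    (hA : IsAmenable mu.length (fun _ => 0) (fun r => mu.getD r 0) T) {r r' c : ℕ}
    (h : InDiagram mu.length (fun _ => 0) (fun r => mu.getD r 0) (r', c)) (hr : r ≤ r') :
    T (r, c) ≤ T (r', c) := by
  induction r', hr using Nat.le_induction with
  | base => exact le_rfl
  | succ r' _ ih =>
    have hmid := hmu.inDiagram_of_le h (Nat.le_succ r') le_rfl
    exact (ih hmid).trans (hA.2.2.2.1 r' c hmid h)

theorem IsAmenable.eq_two_mul_row_succ (hmu : IsPartitionList mu)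
    (hA : IsAmenable mu.length (fun _ => 0) (fun r => mu.getD r 0) T)
    (hnm : NoMarkedAboveOne (readingWord mu.length (fun _ => 0) (fun r => mu.getD r 0) T)) :
    ∀ r {c : ℕ}, InDiagram mu.length (fun _ => 0) (fun r => mu.getD r 0) (r, c) → 1 ≤ c →
      T (r, c) = 2 * (r + 1)
  | r, c, hp, hc => by
    obtain h1 | ⟨v, hv1, hvr, hv⟩ := hA.eq_one_or_eq_two_mul hnm hp
    · exact absurd h1 (hA.ne_one_of_col_lt (hmu.inDiagram_of_le hp le_rfl (Nat.zero_le c)) hp hc)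
    cases r with
    | zero =>
      simp only at hvr
      omega
    | succ r =>
      have hup := hmu.inDiagram_of_le hp (Nat.le_succ r) le_rfl
      have hTup := hA.eq_two_mul_row_succ hmu hnm r hup hc
      have hle := hA.2.2.2.1 r c hup hp
      have hne := hA.2.2.2.2.2.1 r (r + 1) c (r + 1) (by omega) (by omega) hup hp
      simp only at hvr
      omega

def firstColumn (mu : List ℕ) (T : ℕ × ℕ → ℕ) : List ℕ :=
  ((readingCells mu.length (fun _ => 0) (fun r => mu.getD r 0)).filter fun p => p.2 = 0).map T

theorem mem_firstColumn {p : ℕ × ℕ}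
    (hp : InDiagram mu.length (fun _ => 0) (fun r => mu.getD r 0) p) (hp0 : p.2 = 0) :
    T p ∈ firstColumn mu T :=
  List.mem_map_of_mem (List.mem_filter.2 ⟨mem_readingCells.2 hp, decide_eq_true hp0⟩)

theorem count_readingWord_eq_add_firstColumn (T : ℕ × ℕ → ℕ) (t : ℕ) :
    (readingWord mu.length (fun _ => 0) (fun r => mu.getD r 0) T).count t =
      (((readingCells mu.length (fun _ => 0) (fun r => mu.getD r 0)).filter
        fun p => !decide (p.2 = 0)).map T).count t + (firstColumn mu T).count t := by
  have := ((List.filter_append_perm (fun p => decide (p.2 = 0))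
    (readingCells mu.length (fun _ => 0) (fun r => mu.getD r 0))).map T).count_eq t
  rw [readingWord_eq_map, ← this, List.map_append, List.count_append, firstColumn]
  omega

theorem IsAmenable.pairwise_firstColumn (hmu : IsPartitionList mu)
    (hA : IsAmenable mu.length (fun _ => 0) (fun r => mu.getD r 0) T) :
    (firstColumn mu T).Pairwise fun a b => a ≤ b ∧ ¬(a = 2 ∧ b = 2) := by
  refine List.pairwise_map.2 <| (pairwise_readsBefore_readingCells.filter _).imp_of_mem
    fun {p q} hp hq hpq => ?_
  obtain ⟨r, c⟩ := p
  obtain ⟨r', c'⟩ := q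
  simp only [List.mem_filter, mem_readingCells, decide_eq_true_eq] at hp hq
  obtain ⟨hp, rfl⟩ := hp
  obtain ⟨hq, rfl⟩ := hq
  have hrr : r < r' := by simpa [ReadsBefore] using hpq
  exact ⟨hA.col_mono hmu hq hrr.le, hA.2.2.2.2.2.1 r r' 0 1 le_rfl hrr.ne hp hq⟩

theorem IsAmenable.count_two_firstColumn (hmu : IsPartitionList mu)
    (hA : IsAmenable mu.length (fun _ => 0) (fun r => mu.getD r 0) T)
    (hnm : NoMarkedAboveOne (readingWord mu.length (fun _ => 0) (fun r => mu.getD r 0) T))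
    (h0 : 0 < mu.length) : (firstColumn mu T).count 2 = 1 := by
  have hle : (firstColumn mu T).count 2 ≤ 1 := by
    have := (hA.pairwise_firstColumn hmu).filter (· == 2)
    rw [List.filter_beq, List.pairwise_replicate] at this
    simpa using this
  suffices h2 : 2 ∈ firstColumn mu T by
    have := List.count_pos_iff.2 h2
    omega
  have h00 : InDiagram mu.length (fun _ => 0) (fun r => mu.getD r 0) (0, 0) :=
    ⟨h0, le_rfl, show 0 < mu.getD 0 0 by
      rw [List.getD_eq_getElem _ _ h0]; exact hmu.2 _ (List.getElem_mem h0)⟩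
  obtain h1 | ⟨v, hv1, hv, hTv⟩ := hA.eq_one_or_eq_two_mul hnm h00
  · -- a `1′` in the corner needs a `1` read after it, which can only sit in the first column
    obtain ⟨P, S, hsplit, -, hS⟩ := exists_readingWord_eq_append (T := T) h00
    have hsplit' : readingWord mu.length (fun _ => 0) (fun r => mu.getD r 0) T =
        P.map T ++ (2 * 1 - 1) :: S.map T := by rw [hsplit, h1]
    obtain ⟨⟨r, c⟩, hq, hTq⟩ := List.mem_map.1
      (RightmostUnmarked.mem_of_eq_append hA.2.2.2.2.2.2.2 le_rfl hsplit')
    obtain ⟨hqd, hq1 | ⟨-, hq2⟩⟩ := hS _ hq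
    · rcases Nat.eq_zero_or_pos c with rfl | hc
      · exact (show T (r, 0) = 2 from hTq) ▸ mem_firstColumn hqd rfl
      · have := hA.eq_two_mul_row_succ hmu hnm r hqd hc
        omega
    · exact absurd hq2 (Nat.not_lt_zero _)
  · exact (show T (0, 0) = 2 by simp only at hv; omega) ▸ mem_firstColumn h00 rfl

theorem IsAmenable.firstColumn_perm (hmu : IsPartitionList mu)
    (hA : IsAmenable mu.length (fun _ => 0) (fun r => mu.getD r 0) T)
    (hA' : IsAmenable mu.length (fun _ => 0) (fun r => mu.getD r 0) T')
    (hnm : NoMarkedAboveOne (readingWord mu.length (fun _ => 0) (fun r => mu.getD r 0) T))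
    (hnm' : NoMarkedAboveOne (readingWord mu.length (fun _ => 0) (fun r => mu.getD r 0) T'))
    (hc : ∀ i, 1 ≤ i →
      contentAt (readingWord mu.length (fun _ => 0) (fun r => mu.getD r 0) T) i =
        contentAt (readingWord mu.length (fun _ => 0) (fun r => mu.getD r 0) T') i) :
    (firstColumn mu T).Perm (firstColumn mu T') := by
  rcases Nat.eq_zero_or_pos mu.length with h0 | h0
  · simp [firstColumn, readingCells, h0]
  set w := readingWord mu.length (fun _ => 0) (fun r => mu.getD r 0) T
  set w' := readingWord mu.length (fun _ => 0) (fun r => mu.getD r 0) T'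
  have hrest : ((readingCells mu.length (fun _ => 0) (fun r => mu.getD r 0)).filter
      fun p => !decide (p.2 = 0)).map T = ((readingCells mu.length (fun _ => 0)
        (fun r => mu.getD r 0)).filter fun p => !decide (p.2 = 0)).map T' :=
    List.map_inj_left.2 fun ⟨r, c⟩ hp => by
      simp only [List.mem_filter, mem_readingCells, Bool.not_eq_eq_eq_not, Bool.not_true,
        decide_eq_false_iff_not] at hp
      rw [hA.eq_two_mul_row_succ hmu hnm r hp.1 (Nat.pos_of_ne_zero hp.2),
        hA'.eq_two_mul_row_succ hmu hnm' r hp.1 (Nat.pos_of_ne_zero hp.2)]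
  obtain ⟨R, e, e'⟩ : ∃ R : List ℕ,
      (∀ t, w.count t = R.count t + (firstColumn mu T).count t) ∧
        ∀ t, w'.count t = R.count t + (firstColumn mu T').count t :=
    ⟨_, count_readingWord_eq_add_firstColumn T,
      hrest ▸ count_readingWord_eq_add_firstColumn T'⟩
  refine List.perm_iff_count.2 fun t => ?_
  have h2 := hA.count_two_firstColumn hmu hnm h0
  have h2' := hA'.count_two_firstColumn hmu hnm' h0
  have h1 : w.count 2 + w.count 1 = w'.count 2 + w'.count 1 := hc 1 le_rfl
  have h0 : w.count 0 = 0 := hA.count_zero_readingWord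
  have h0' : w'.count 0 = 0 := hA'.count_zero_readingWord
  have := e 0; have := e' 0; have := e 1; have := e' 1; have := e 2; have := e' 2
  have := e t; have := e' t
  rcases (show t ≤ 2 ∨ 3 ≤ t by omega) with ht | ht
  · interval_cases t <;> omega
  · have := count_eq_of_contentAt_eq hc hnm hnm' ht
    omega

theorem IsAmenable.eq_of_contentAt_eq (hmu : IsPartitionList mu)
    (hA : IsAmenable mu.length (fun _ => 0) (fun r => mu.getD r 0) T)
    (hA' : IsAmenable mu.length (fun _ => 0) (fun r => mu.getD r 0) T')
    (hnm : NoMarkedAboveOne (readingWord mu.length (fun _ => 0) (fun r => mu.getD r 0) T))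
    (hnm' : NoMarkedAboveOne (readingWord mu.length (fun _ => 0) (fun r => mu.getD r 0) T'))
    (hc : ∀ i, 1 ≤ i →
      contentAt (readingWord mu.length (fun _ => 0) (fun r => mu.getD r 0) T) i =
        contentAt (readingWord mu.length (fun _ => 0) (fun r => mu.getD r 0) T') i) :
    T = T' := by
  have hcol : firstColumn mu T = firstColumn mu T' :=
    (hA.firstColumn_perm hmu hA' hnm hnm' hc).eq_of_pairwise
      (fun a b _ _ hab hba => le_antisymm hab.1 hba.1)
      (hA.pairwise_firstColumn hmu) (hA'.pairwise_firstColumn hmu)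
  funext ⟨r, c⟩
  by_cases hp : InDiagram mu.length (fun _ => 0) (fun r => mu.getD r 0) (r, c)
  · rcases Nat.eq_zero_or_pos c with rfl | hc
    · exact List.map_inj_left.1 hcol _ (List.mem_filter.2 ⟨mem_readingCells.2 hp, rfl⟩)
    · rw [hA.eq_two_mul_row_succ hmu hnm r hp hc, hA'.eq_two_mul_row_succ hmu hnm' r hp hc]
  · rw [hA.2.1 _ hp, hA'.2.1 _ hp]

end StraightShape

theorem near_staircase_top_row_multfree_general (m k : ℕ) :
    (∀ (mu : List ℕ) (T : ℕ × ℕ → ℕ), IsPartitionList mu →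
        IsAmenable mu.length (fun _ => 0) (fun r => mu.getD r 0) T →
        HasContent mu.length (fun _ => 0) (fun r => mu.getD r 0) T (m :: staircase k) →
        ∀ p : ℕ × ℕ, InDiagram mu.length (fun _ => 0) (fun r => mu.getD r 0) p →
          ∀ i : ℕ, 2 ≤ i → T p ≠ 2 * i - 1) ∧
    (∀ mu : List ℕ, IsPartitionList mu → mu.sum = m + k * (k + 1) / 2 →
        gCoeff (m :: staircase k) mu ≤ 1) := by
  refine ⟨fun mu T _ hA hC p hp i hi hTp => ?_, fun mu hmu _ => ?_⟩
  · exact List.count_eq_zero.1 (hA.noMarkedAboveOne_of_hasContent_cons_staircase hC i hi)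
      (hTp ▸ mem_readingWord hp)
  · have hsub : (gSet (m :: staircase k) mu).Subsingleton := fun T ⟨hA, hC⟩ T' ⟨hA', hC'⟩ =>
      hA.eq_of_contentAt_eq hmu hA' (hA.noMarkedAboveOne_of_hasContent_cons_staircase hC)
        (hA'.noMarkedAboveOne_of_hasContent_cons_staircase hC') fun i hi =>
          (hC i hi).trans (hC' i hi).symm
    exact (Set.ncard_le_one hsub.finite).2 fun _ ha _ hb => hsub ha hb

/-- Let `λ = (m, k, k-1, …, 2, 1)` with `m ≥ k + 1 ≥ 2` (a near staircase whose
top row exceeds a staircase of length `k`).  Then every amenable tableau with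
content `λ` contains no marked letter i′ (encoded `2*i - 1`) with `i > 1`, and
consequently `g_{λμ} ≤ 1` for every partition `μ` of `m + k(k+1)/2`. -/
theorem near_staircase_top_row_multfree (m k : ℕ) (hk : 1 ≤ k) (hm : k + 1 ≤ m) :
    (∀ (mu : List ℕ) (T : ℕ × ℕ → ℕ), IsPartitionList mu →
        IsAmenable mu.length (fun _ => 0) (fun r => mu.getD r 0) T →
        HasContent mu.length (fun _ => 0) (fun r => mu.getD r 0) T (m :: staircase k) →
        ∀ p : ℕ × ℕ, InDiagram mu.length (fun _ => 0) (fun r => mu.getD r 0) p →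
          ∀ i : ℕ, 2 ≤ i → T p ≠ 2 * i - 1) ∧
    (∀ mu : List ℕ, IsPartitionList mu → mu.sum = m + k * (k + 1) / 2 →
        gCoeff (m :: staircase k) mu ≤ 1) :=
  near_staircase_top_row_multfree_general m k
end
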